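/- arXiv:0802.1227 — 7 statements merged into one kernel-verified Lean document; each statement's English description precedes it below -/
import Mathlib

section
/- Let ν be the measure on ℝ^ℓ = ℝ^{ℓ-1} × ℝ given by dν(H', H_ℓ) = e^{2c H_ℓ} dH' dH_ℓ for a constant c > 0. Let p ∈ L¹(ℝ^{ℓ-1}) and define σ(H', H_ℓ) = e^{-2c H_ℓ} p(H'). Then the convolution operator Sf = f *_{ℝ^ℓ} σ is bounded from L¹(ν) to weak-L¹(ν); more precisely, for all f ∈ L¹(ν) and t > 0, ν({H : |Sf(H)| > t}) ≤ (1/(2c t)) · ‖p‖_{L¹(ℝ^{ℓ-1})} · ‖f‖_{L¹(ν)}. -/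
/-!
Bound the convolution by that of `|f|` and `|σ|` and substitute `M = H - L`: the factor
`e^{-2c H_ℓ}` comes out, so `|Sf(H)| ≤ e^{-2c H_ℓ} Ψ(H')` with `Ψ(a) = ∫ |f(M)| |p(a - M')| dν(M)`.
Hence `{|Sf| > t}` lies in `{t e^{2c H_ℓ} < Ψ(H')}`, whose fibre over `H'` is a half-line
`H_ℓ < β` of `e^{2c H_ℓ} dH_ℓ`-measure `e^{2cβ}/(2c) = Ψ(H')/(2ct)`. Integrating over `H'` and
using Fubini and translation invariance, `∫ Ψ = ‖f‖_{L¹(ν)} ‖p‖_{L¹}`.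
-/

open MeasureTheory Real Set
open scoped ENNReal

theorem setLIntegral_exp_mul_setOf_lt_le {κ t : ℝ} (hκ : 0 < κ) (ht : 0 < t) (ψ : ℝ≥0∞) :
    ∫⁻ b in {b : ℝ | ENNReal.ofReal (t * exp (κ * b)) < ψ}, ENNReal.ofReal (exp (κ * b)) ≤
      ψ / ENNReal.ofReal (κ * t) := by
  rcases eq_or_ne ψ ⊤ with rfl | hψ
  · simp [ENNReal.top_div_of_ne_top]
  obtain ⟨s, hs, rfl⟩ : ∃ s, 0 ≤ s ∧ ψ = ENNReal.ofReal s :=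
    ⟨ψ.toReal, ENNReal.toReal_nonneg, (ENNReal.ofReal_toReal hψ).symm⟩
  rcases hs.eq_or_lt with rfl | hs
  · simp
  set β := log (s / t) / κ
  have hsub : {b : ℝ | ENNReal.ofReal (t * exp (κ * b)) < ENNReal.ofReal s} ⊆ Iic β := by
    intro b hb
    have hb : exp (κ * b) < s / t := by
      rw [lt_div_iff₀ ht, mul_comm]
      exact (ENNReal.ofReal_lt_ofReal_iff hs).mp hb
    rw [mem_Iic, le_div_iff₀ hκ, mul_comm]
    exact ((lt_log_iff_exp_lt (div_pos hs ht)).mpr hb).le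
  calc _ ≤ ∫⁻ b in Iic β, ENNReal.ofReal (exp (κ * b)) := lintegral_mono_set hsub
    _ = ENNReal.ofReal (exp (κ * β) / κ) := by
      rw [← integral_exp_mul_Iic hκ, ofReal_integral_eq_lintegral_ofReal
        (integrableOn_exp_mul_Iic hκ β) (ae_of_all _ fun _ => (exp_pos _).le)]
    _ = ENNReal.ofReal s / ENNReal.ofReal (κ * t) := by
      rw [mul_div_cancel₀ _ hκ.ne', exp_log (div_pos hs ht), ← ENNReal.ofReal_div_of_pos
        (mul_pos hκ ht), div_div, mul_comm t]

instance Prod.instMeasurableNeg {α β : Type*} [MeasurableSpace α] [MeasurableSpace β] [Neg α]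
    [Neg β] [MeasurableNeg α] [MeasurableNeg β] : MeasurableNeg (α × β) :=
  ⟨measurable_neg.prodMap measurable_neg⟩

instance Prod.instMeasurableAdd₂ {α β : Type*} [MeasurableSpace α] [MeasurableSpace β] [Add α]
    [Add β] [MeasurableAdd₂ α] [MeasurableAdd₂ β] : MeasurableAdd₂ (α × β) :=
  ⟨(measurable_fst.fst.add measurable_snd.fst).prodMk (measurable_fst.snd.add measurable_snd.snd)⟩

instance Measure.prod.instIsNegInvariant {α β : Type*} [MeasurableSpace α] [MeasurableSpace β]
    [Neg α] [Neg β] [MeasurableNeg α] [MeasurableNeg β] (μ : Measure α) (ν : Measure β)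
    [SFinite μ] [SFinite ν] [μ.IsNegInvariant] [ν.IsNegInvariant] :
    (μ.prod ν).IsNegInvariant := by
  refine ⟨?_⟩
  change Measure.map (Prod.map Neg.neg Neg.neg) (μ.prod ν) = μ.prod ν
  rw [← Measure.map_prod_map _ _ measurable_neg measurable_neg, Measure.map_neg_eq_self,
    Measure.map_neg_eq_self]

section ExpWeighted

variable {G : Type*} [MeasurableSpace G] {μ : Measure G}

/-- The measure `ν` of the statement is `expWeighted volume (2 * c)`. -/
noncomputable def expWeighted (μ : Measure G) (κ : ℝ) : Measure (G × ℝ) :=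
  (μ.prod volume).withDensity fun H => ENNReal.ofReal (exp (κ * H.2))

instance [SFinite μ] (κ : ℝ) : SFinite (expWeighted μ κ) := by
  unfold expWeighted
  infer_instance

theorem absolutelyContinuous_expWeighted (κ : ℝ) : μ.prod volume ≪ expWeighted μ κ :=
  withDensity_absolutelyContinuous' (by fun_prop) (ae_of_all _ fun _ => by simp [exp_pos])

theorem expWeighted_setOf_lt_le {κ t : ℝ} (hκ : 0 < κ) (ht : 0 < t)
    {Ψ : G → ℝ≥0∞} (hΨ : Measurable Ψ) :
    expWeighted μ κ {H | ENNReal.ofReal (t * exp (κ * H.2)) < Ψ H.1} ≤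
      (∫⁻ a, Ψ a ∂μ) / ENNReal.ofReal (κ * t) := by
  have hE : MeasurableSet {H : G × ℝ | ENNReal.ofReal (t * exp (κ * H.2)) < Ψ H.1} :=
    measurableSet_lt (by fun_prop) (hΨ.comp measurable_fst)
  rw [expWeighted, withDensity_apply _ hE, ← lintegral_indicator hE,
    lintegral_prod _ ((Measurable.indicator (by fun_prop) hE).aemeasurable),
    ENNReal.div_eq_inv_mul, ← lintegral_const_mul' _ _ (by simp [ht, hκ])]
  refine lintegral_mono fun a => ?_
  rw [← ENNReal.div_eq_inv_mul]
  refine le_trans (le_of_eq ?_) (setLIntegral_exp_mul_setOf_lt_le hκ ht (Ψ a))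
  rw [← lintegral_indicator (measurableSet_lt (by fun_prop) measurable_const)]
  rfl

variable [AddCommGroup G] [MeasurableAdd₂ G] [MeasurableNeg G] [SFinite μ]
  [μ.IsAddLeftInvariant]

theorem lintegral_lintegral_mul_sub_fst (κ : ℝ) {F : G × ℝ → ℝ≥0∞} {P : G → ℝ≥0∞}
    (hF : Measurable F) (hP : Measurable P) :
    ∫⁻ a, ∫⁻ M, F M * P (a - M.1) ∂expWeighted μ κ ∂μ =
      (∫⁻ M, F M ∂expWeighted μ κ) * ∫⁻ a, P a ∂μ := by
  rw [lintegral_lintegral_swap (by fun_prop), ← lintegral_mul_const _ hF]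
  refine lintegral_congr fun M => ?_
  rw [lintegral_const_mul _ (by fun_prop),
    (measurePreserving_sub_right μ M.1).lintegral_comp_emb
      (MeasurableEquiv.subRight M.1).measurableEmbedding]

variable [μ.IsNegInvariant]

theorem lintegral_conv_exp_neg_eq (κ : ℝ) (F : G × ℝ → ℝ≥0∞) (P : G → ℝ≥0∞) (H : G × ℝ) :
    ∫⁻ L, F (H - L) * (ENNReal.ofReal (exp (-κ * L.2)) * P L.1) ∂μ.prod volume =
      ENNReal.ofReal (exp (-κ * H.2)) * ∫⁻ M, F M * P (H.1 - M.1) ∂expWeighted μ κ := by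
  have hweight : ∀ L : G × ℝ, exp (-κ * L.2) = exp (-κ * H.2) * exp (κ * (H - L).2) := by
    intro L
    rw [← exp_add, Prod.snd_sub]
    ring_nf
  have htranslate := (Measure.measurePreserving_sub_left (μ.prod volume) H).lintegral_comp_emb
    (MeasurableEquiv.subLeft H).measurableEmbedding fun M =>
      ENNReal.ofReal (exp (-κ * H.2)) * (ENNReal.ofReal (exp (κ * M.2)) * (F M * P (H.1 - M.1)))
  rw [expWeighted, lintegral_withDensity_eq_lintegral_mul_non_measurable _ (by fun_prop)
    (ae_of_all _ fun _ => ENNReal.ofReal_lt_top), ← lintegral_const_mul' _ _ ENNReal.ofReal_ne_top]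
  simp only [Pi.mul_apply]
  rw [← htranslate]
  refine lintegral_congr fun L => ?_
  rw [hweight L, ENNReal.ofReal_mul (exp_pos _).le, Prod.fst_sub, sub_sub_cancel]
  ring

theorem expWeighted_setOf_lt_lintegral_conv_le {κ t : ℝ} (hκ : 0 < κ) (ht : 0 < t)
    {F : G × ℝ → ℝ≥0∞} {P : G → ℝ≥0∞} (hF : Measurable F) (hP : Measurable P) :
    expWeighted μ κ {H | ENNReal.ofReal t <
        ∫⁻ L, F (H - L) * (ENNReal.ofReal (exp (-κ * L.2)) * P L.1) ∂μ.prod volume} ≤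
      (∫⁻ M, F M ∂expWeighted μ κ) * (∫⁻ a, P a ∂μ) / ENNReal.ofReal (κ * t) := by
  have hsub : {H : G × ℝ | ENNReal.ofReal t <
        ∫⁻ L, F (H - L) * (ENNReal.ofReal (exp (-κ * L.2)) * P L.1) ∂μ.prod volume} ⊆
      {H | ENNReal.ofReal (t * exp (κ * H.2)) < ∫⁻ M, F M * P (H.1 - M.1) ∂expWeighted μ κ} := by
    intro H (hH : ENNReal.ofReal t < _)
    rw [lintegral_conv_exp_neg_eq] at hH
    have hexp : ENNReal.ofReal (exp (κ * H.2)) * ENNReal.ofReal (exp (-κ * H.2)) = 1 := by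
      rw [← ENNReal.ofReal_mul (exp_pos _).le, ← exp_add, neg_mul, add_neg_cancel, exp_zero,
        ENNReal.ofReal_one]
    calc ENNReal.ofReal (t * exp (κ * H.2))
          = ENNReal.ofReal (exp (κ * H.2)) * ENNReal.ofReal t := by
          rw [mul_comm, ENNReal.ofReal_mul (exp_pos _).le]
      _ < ENNReal.ofReal (exp (κ * H.2)) * (ENNReal.ofReal (exp (-κ * H.2)) *
            ∫⁻ M, F M * P (H.1 - M.1) ∂expWeighted μ κ) :=
          ENNReal.mul_lt_mul_right (by simp [exp_pos]) ENNReal.ofReal_ne_top hH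
      _ = _ := by rw [← mul_assoc, hexp, one_mul]
  have hΨ : Measurable fun a => ∫⁻ M, F M * P (a - M.1) ∂expWeighted μ κ :=
    Measurable.lintegral_prod_right' (f := fun q : G × (G × ℝ) => F q.2 * P (q.1 - q.2.1))
      (by fun_prop)
  calc _ ≤ _ := measure_mono hsub
    _ ≤ _ := expWeighted_setOf_lt_le hκ ht hΨ
    _ = _ := by rw [lintegral_lintegral_mul_sub_fst κ hF hP]

theorem expWeighted_setOf_lt_abs_conv_le {κ t : ℝ} (hκ : 0 < κ) (ht : 0 < t)
    {f : G × ℝ → ℝ} {p : G → ℝ} (hf : Integrable f (expWeighted μ κ)) (hp : Integrable p μ) :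
    expWeighted μ κ {H | t < |∫ L, f (H - L) * (exp (-κ * L.2) * p L.1) ∂μ.prod volume|} ≤
      ENNReal.ofReal (1 / (κ * t) * (∫ x, |p x| ∂μ) * ∫ x, |f x| ∂expWeighted μ κ) := by
  obtain ⟨f', hf', hff'⟩ := hf.aestronglyMeasurable
  obtain ⟨p', hp', hpp'⟩ := hp.aestronglyMeasurable
  have hsub : {H | t < |∫ L, f (H - L) * (exp (-κ * L.2) * p L.1) ∂μ.prod volume|} ⊆
      {H | ENNReal.ofReal t <
        ∫⁻ L, ‖f' (H - L)‖ₑ * (ENNReal.ofReal (exp (-κ * L.2)) * ‖p' L.1‖ₑ) ∂μ.prod volume} := by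
    intro H (hH : t < _)
    calc ENNReal.ofReal t < ‖∫ L, f (H - L) * (exp (-κ * L.2) * p L.1) ∂μ.prod volume‖ₑ := by
          rwa [Real.enorm_eq_ofReal_abs, ENNReal.ofReal_lt_ofReal_iff_of_nonneg ht.le]
      _ ≤ _ := enorm_integral_le_lintegral_enorm _
      _ = _ := lintegral_congr_ae ?_
    filter_upwards [(Measure.measurePreserving_sub_left _ H).quasiMeasurePreserving.ae_eq
      ((absolutelyContinuous_expWeighted κ).ae_eq hff'),
      Measure.quasiMeasurePreserving_fst.ae_eq hpp'] with L hfL hpL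
    rw [enorm_mul, enorm_mul, Real.enorm_of_nonneg (exp_pos _).le]
    simp only [Function.comp_apply] at hfL hpL
    rw [hfL, hpL]
  have hp_norm : ENNReal.ofReal (∫ x, |p x| ∂μ) = ∫⁻ x, ‖p' x‖ₑ ∂μ :=
    (ofReal_integral_norm_eq_lintegral_enorm hp).trans
      (lintegral_congr_ae (hpp'.mono fun _ hx => congrArg enorm hx))
  have hf_norm :
      ENNReal.ofReal (∫ x, |f x| ∂expWeighted μ κ) = ∫⁻ x, ‖f' x‖ₑ ∂expWeighted μ κ :=
    (ofReal_integral_norm_eq_lintegral_enorm hf).trans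
      (lintegral_congr_ae (hff'.mono fun _ hx => congrArg enorm hx))
  calc _ ≤ _ := measure_mono hsub
    _ ≤ _ := expWeighted_setOf_lt_lintegral_conv_le hκ ht hf'.measurable.enorm
      hp'.measurable.enorm
    _ = _ := by
      rw [← hp_norm, ← hf_norm, ← ENNReal.ofReal_mul (integral_nonneg fun _ => abs_nonneg _),
        ← ENNReal.ofReal_div_of_pos (mul_pos hκ ht)]
      congr 1
      ring

end ExpWeighted

theorem stmt1_general (ℓ : ℕ) (c : ℝ) (hc : 0 < c)
    (p : EuclideanSpace ℝ (Fin (ℓ - 1)) → ℝ) (hp : Integrable p volume) :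
    ∀ f : EuclideanSpace ℝ (Fin (ℓ - 1)) × ℝ → ℝ,
      Integrable f
        (volume.withDensity (fun H : EuclideanSpace ℝ (Fin (ℓ - 1)) × ℝ =>
          ENNReal.ofReal (Real.exp (2 * c * H.2)))) →
      ∀ t : ℝ, 0 < t →
        (volume.withDensity (fun H : EuclideanSpace ℝ (Fin (ℓ - 1)) × ℝ =>
            ENNReal.ofReal (Real.exp (2 * c * H.2))))
            {H : EuclideanSpace ℝ (Fin (ℓ - 1)) × ℝ |
              t < |∫ L : EuclideanSpace ℝ (Fin (ℓ - 1)) × ℝ,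
                    f (H - L) * (Real.exp (-2 * c * L.2) * p L.1)|} ≤
          ENNReal.ofReal ((1 / (2 * c * t)) * (∫ x, |p x|) *
            ∫ x, |f x| ∂(volume.withDensity (fun H : EuclideanSpace ℝ (Fin (ℓ - 1)) × ℝ =>
              ENNReal.ofReal (Real.exp (2 * c * H.2))))) := by
  intro f hf t ht
  rw [show (-2 : ℝ) * c = -(2 * c) by ring]
  exact expWeighted_setOf_lt_abs_conv_le (by positivity) ht hf hp

/-- weak type (1,1) for convolution with
`σ(H', H_ℓ) = e^{-2c H_ℓ} p(H')` with respect to `dν(H) = e^{2c H_ℓ} dH` on `ℝ^{ℓ-1} × ℝ`. -/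
theorem stmt1 (ℓ : ℕ) (hℓ : 1 ≤ ℓ) (c : ℝ) (hc : 0 < c)
    (p : EuclideanSpace ℝ (Fin (ℓ - 1)) → ℝ) (hp : Integrable p volume) :
    ∀ f : EuclideanSpace ℝ (Fin (ℓ - 1)) × ℝ → ℝ,
      Integrable f
        (volume.withDensity (fun H : EuclideanSpace ℝ (Fin (ℓ - 1)) × ℝ =>
          ENNReal.ofReal (Real.exp (2 * c * H.2)))) →
      ∀ t : ℝ, 0 < t →
        (volume.withDensity (fun H : EuclideanSpace ℝ (Fin (ℓ - 1)) × ℝ =>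
            ENNReal.ofReal (Real.exp (2 * c * H.2))))
            {H : EuclideanSpace ℝ (Fin (ℓ - 1)) × ℝ |
              t < |∫ L : EuclideanSpace ℝ (Fin (ℓ - 1)) × ℝ,
                    f (H - L) * (Real.exp (-2 * c * L.2) * p L.1)|} ≤
          ENNReal.ofReal ((1 / (2 * c * t)) * (∫ x, |p x|) *
            ∫ x, |f x| ∂(volume.withDensity (fun H : EuclideanSpace ℝ (Fin (ℓ - 1)) × ℝ =>
              ENNReal.ofReal (Real.exp (2 * c * H.2))))) :=
  stmt1_general ℓ c hc p hp
end

section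
/- Let ℓ ≥ 1 and γ > 0, and for λ = (λ', λ_ℓ) ∈ ℝ^{ℓ-1} × ℝ and ε ∈ (0, 1/4) set F_ε(λ) = [(|λ'|² + ε)² + λ_ℓ²]^{-γ/2}. Let B = {λ ∈ ℝ^ℓ : |λ| < r} for some fixed r > 0. Then there is a constant C (depending on γ, ℓ, r but not ε) such that: if 2γ < ℓ+1 then ∫_B F_ε(λ) dλ ≤ C; if 2γ = ℓ+1 then ∫_B F_ε(λ) dλ ≤ C log(1/ε); and if 2γ > ℓ+1 then ∫_B F_ε(λ) dλ ≤ C ε^{(ℓ+1)/2 - γ}. -/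
/-!
Layer cake: since `F_ε ≤ ε^{-γ}`, we have `∫_B F_ε ≤ |B| + ∫_1^{ε^{-γ}} |{F_ε > t}| dt`.
The super-level set `{F_ε > t}` lies in `{|λ'|⁴ + λ_ℓ² < t^{-2/γ}}`, a set adapted to the
dilations `(λ', λ_ℓ) ↦ (s λ', s² λ_ℓ)`, so its volume is `c t^{-Q/(2γ)}` with `Q = ℓ + 1` the
homogeneous dimension. Integrating `t^{-Q/(2γ)}` up to `ε^{-γ}` gives a bound that is uniform,
logarithmic or of order `ε^{Q/2 - γ}` according as `Q/(2γ)` is greater than, equal to or less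
than `1`.
-/

open MeasureTheory Real Set Metric Module
open scoped ENNReal

theorem integral_le_measureReal_add_integral_of_meas_lt_le {α : Type*} [MeasurableSpace α]
    {ν : Measure α} [IsFiniteMeasure ν] {f : α → ℝ} {g : ℝ → ℝ} {T : ℝ} (hT : 1 ≤ T)
    (hf0 : 0 ≤ f) (hfT : ∀ x, f x ≤ T) (hf : AEMeasurable f ν)
    (hg : IntegrableOn g (Ioc 1 T)) (hg0 : ∀ t ∈ Ioc 1 T, 0 ≤ g t)
    (hdist : ∀ t ∈ Ioc 1 T, ν {x | t < f x} ≤ ENNReal.ofReal (g t)) :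
    ∫ x, f x ∂ν ≤ ν.real univ + ∫ t in Ioc 1 T, g t := by
  have hsplit : Ioi (0 : ℝ) = Ioc 0 1 ∪ Ioc 1 T ∪ Ioi T := by
    rw [Ioc_union_Ioc_eq_Ioc zero_le_one hT, Ioc_union_Ioi_eq_Ioi (zero_le_one.trans hT)]
  have htail : EqOn (fun t => ν {x | t < f x}) 0 (Ioi T) := fun t ht => by
    simp [fun x => ((hfT x).trans (le_of_lt ht)).not_gt]
  rw [integral_eq_lintegral_of_nonneg_ae (ae_of_all _ hf0) hf.aestronglyMeasurable,
    lintegral_eq_lintegral_meas_lt ν (ae_of_all _ hf0) hf]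
  refine ENNReal.toReal_le_of_le_ofReal
    (add_nonneg measureReal_nonneg (setIntegral_nonneg measurableSet_Ioc hg0)) ?_
  calc ∫⁻ t in Ioi 0, ν {x | t < f x}
      = (∫⁻ t in Ioc 0 1, ν {x | t < f x}) + (∫⁻ t in Ioc 1 T, ν {x | t < f x})
          + ∫⁻ t in Ioi T, ν {x | t < f x} := by
        rw [hsplit, lintegral_union measurableSet_Ioi
          (by rw [Ioc_union_Ioc_eq_Ioc zero_le_one hT]; exact Ioc_disjoint_Ioi le_rfl),
          lintegral_union measurableSet_Ioc (Ioc_disjoint_Ioc_of_le le_rfl)]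
    _ ≤ ν univ + (∫⁻ t in Ioc 1 T, ENNReal.ofReal (g t)) + 0 := by
        gcongr ?_ + ?_ + ?_
        · calc (∫⁻ t in Ioc 0 1, ν {x | t < f x}) ≤ ∫⁻ t in Ioc 0 1, ν univ :=
                lintegral_mono fun t => measure_mono (subset_univ _)
            _ = ν univ := by simp
        · exact setLIntegral_mono' measurableSet_Ioc hdist
        · exact (setLIntegral_eq_zero measurableSet_Ioi htail).le
    _ = ENNReal.ofReal (ν.real univ + ∫ t in Ioc 1 T, g t) := by
        have hg0' : 0 ≤ᵐ[volume.restrict (Ioc 1 T)] g :=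
          (ae_restrict_iff' measurableSet_Ioc).2 (ae_of_all _ hg0)
        rw [add_zero, ENNReal.ofReal_add measureReal_nonneg (integral_nonneg_of_ae hg0'),
          ofReal_integral_eq_lintegral_ofReal hg hg0', ofReal_measureReal]

section

variable {p T : ℝ}

lemma integral_Ioc_one_rpow_neg (hp : p ≠ 1) (hT : 1 ≤ T) :
    ∫ t in Ioc 1 T, t ^ (-p) = (T ^ (1 - p) - 1) / (1 - p) := by
  have h0 : (0 : ℝ) ∉ uIcc 1 T := by rw [uIcc_of_le hT]; exact fun h => by linarith [h.1]
  rw [← intervalIntegral.integral_of_le hT,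
    integral_rpow (.inr ⟨fun h => hp (neg_injective h), h0⟩), one_rpow, neg_add_eq_sub]

lemma integral_Ioc_one_rpow_neg_le_of_one_lt (hp : 1 < p) (hT : 1 ≤ T) :
    ∫ t in Ioc 1 T, t ^ (-p) ≤ 1 / (p - 1) := by
  rw [integral_Ioc_one_rpow_neg hp.ne' hT, ← neg_div_neg_eq, neg_sub, neg_sub]
  gcongr
  exact sub_le_self _ (rpow_nonneg (by linarith) _)

lemma integral_Ioc_one_rpow_neg_one (hT : 1 ≤ T) : ∫ t in Ioc 1 T, t ^ (-1 : ℝ) = log T := by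
  rw [← intervalIntegral.integral_of_le hT, intervalIntegral.integral_congr (g := fun t => t⁻¹)
    fun t _ => rpow_neg_one t, integral_inv_of_pos one_pos (by linarith), div_one]

lemma integral_Ioc_one_rpow_neg_le_of_lt_one (hp : p < 1) (hT : 1 ≤ T) :
    ∫ t in Ioc 1 T, t ^ (-p) ≤ T ^ (1 - p) / (1 - p) := by
  rw [integral_Ioc_one_rpow_neg hp.ne hT]
  gcongr
  linarith

end

/-- The paper's `F_ε`, with `E` in the role of `ℝ^{ℓ-1}`. -/
noncomputable def anisotropicWeight {E : Type*} [NormedAddCommGroup E] (γ ε : ℝ) (x : E × ℝ) :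
    ℝ :=
  ((‖x.1‖ ^ 2 + ε) ^ 2 + x.2 ^ 2) ^ (-(γ / 2))

section anisotropicWeight

variable {E : Type*} [NormedAddCommGroup E] {γ ε : ℝ}

lemma anisotropicWeight_base_pos (hε : 0 < ε) (x : E × ℝ) :
    0 < (‖x.1‖ ^ 2 + ε) ^ 2 + x.2 ^ 2 := by
  positivity

lemma anisotropicWeight_nonneg (x : E × ℝ) : 0 ≤ anisotropicWeight γ ε x := by
  unfold anisotropicWeight; positivity

lemma continuous_anisotropicWeight (hε : 0 < ε) : Continuous (anisotropicWeight (E := E) γ ε) :=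
  (by fun_prop : Continuous fun x : E × ℝ => (‖x.1‖ ^ 2 + ε) ^ 2 + x.2 ^ 2).rpow_const
    fun x => .inl (anisotropicWeight_base_pos hε x).ne'

lemma anisotropicWeight_le (hγ : 0 < γ) (hε : 0 < ε) (x : E × ℝ) :
    anisotropicWeight γ ε x ≤ ε ^ (-γ) := by
  have hle : ε ^ 2 ≤ (‖x.1‖ ^ 2 + ε) ^ 2 + x.2 ^ 2 := by
    nlinarith [sq_nonneg ‖x.1‖, sq_nonneg x.2, sq_nonneg (‖x.1‖ ^ 2)]
  calc anisotropicWeight γ ε x ≤ (ε ^ 2) ^ (-(γ / 2)) :=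
        rpow_le_rpow_of_nonpos (by positivity) hle (by linarith)
    _ = ε ^ (-γ) := by rw [← rpow_natCast, ← rpow_mul hε.le]; ring_nf

lemma isBounded_setOf_norm_sq_add_sq_lt (r : ℝ) :
    Bornology.IsBounded {x : E × ℝ | ‖x.1‖ ^ 2 + x.2 ^ 2 < r ^ 2} := by
  refine (isBounded_closedBall (x := (0 : E × ℝ)) (r := |r|)).subset ?_
  intro x (hx : ‖x.1‖ ^ 2 + x.2 ^ 2 < r ^ 2)
  rw [mem_closedBall_zero_iff, Prod.norm_def, max_le_iff, ← abs_norm x.1, Real.norm_eq_abs]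
  exact ⟨sq_le_sq.1 (by nlinarith [sq_nonneg x.2]), sq_le_sq.1 (by nlinarith [sq_nonneg ‖x.1‖])⟩

end anisotropicWeight

lemma measureReal_ball_pos {X : Type*} [PseudoMetricSpace X] [ProperSpace X] [MeasurableSpace X]
    (μ : Measure X) [μ.IsOpenPosMeasure] [IsFiniteMeasureOnCompacts μ] (x : X) {r : ℝ}
    (hr : 0 < r) : 0 < μ.real (ball x r) :=
  ENNReal.toReal_pos (measure_ball_pos μ x hr).ne' measure_ball_lt_top.ne

section HaarMeasure

variable {E : Type*} [NormedAddCommGroup E] [NormedSpace ℝ E] [MeasurableSpace E] [BorelSpace E]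
  [FiniteDimensional ℝ E] (μ : Measure E) [μ.IsAddHaarMeasure] {γ ε : ℝ}

theorem measure_setOf_norm_pow_four_add_sq_lt_le {M : ℝ} (hM : 0 < M) :
    μ.prod volume {x : E × ℝ | ‖x.1‖ ^ 4 + x.2 ^ 2 < M} ≤
      ENNReal.ofReal (2 * μ.real (ball 0 1) * M ^ (((finrank ℝ E : ℝ) + 2) / 4)) := by
  set a := M ^ (4⁻¹ : ℝ)
  set b := M ^ (2⁻¹ : ℝ)
  have ha : 0 < a := rpow_pos_of_pos hM _
  have hb : 0 < b := rpow_pos_of_pos hM _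
  have ha4 : a ^ 4 = M := by rw [← rpow_natCast, ← rpow_mul hM.le]; norm_num
  have hb2 : b ^ 2 = M := by rw [← rpow_natCast, ← rpow_mul hM.le]; norm_num
  have hsub : {x : E × ℝ | ‖x.1‖ ^ 4 + x.2 ^ 2 < M} ⊆ ball 0 a ×ˢ ball 0 b := by
    intro x (hx : ‖x.1‖ ^ 4 + x.2 ^ 2 < M)
    simp only [mem_prod, mem_ball_zero_iff, Real.norm_eq_abs]
    constructor
    · exact lt_of_pow_lt_pow_left₀ 4 ha.le (by nlinarith [sq_nonneg x.2])
    · refine lt_of_pow_lt_pow_left₀ 2 hb.le ?_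
      rw [sq_abs]; nlinarith [pow_nonneg (sq_nonneg ‖x.1‖) 2]
  have hvol : a ^ finrank ℝ E * (2 * b) = 2 * M ^ (((finrank ℝ E : ℝ) + 2) / 4) := by
    rw [← rpow_natCast, ← rpow_mul hM.le, mul_left_comm, ← rpow_add hM]
    ring_nf
  calc μ.prod volume {x : E × ℝ | ‖x.1‖ ^ 4 + x.2 ^ 2 < M}
      ≤ μ.prod volume (ball 0 a ×ˢ ball 0 b) := measure_mono hsub
    _ = ENNReal.ofReal (2 * μ.real (ball 0 1) * M ^ (((finrank ℝ E : ℝ) + 2) / 4)) := by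
      rw [Measure.prod_prod, μ.addHaar_ball_of_pos 0 ha, Real.volume_ball,
        ← ofReal_measureReal (measure_ball_lt_top.ne), ← ENNReal.ofReal_mul (by positivity),
        ← ENNReal.ofReal_mul (by positivity)]
      congr 1
      linear_combination μ.real (ball (0 : E) 1) * hvol

lemma measure_lt_anisotropicWeight_le (hγ : 0 < γ) (hε : 0 < ε) {t : ℝ} (ht : 0 < t) :
    μ.prod volume {x | t < anisotropicWeight γ ε x} ≤
      ENNReal.ofReal (2 * μ.real (ball 0 1) * t ^ (-(((finrank ℝ E : ℝ) + 2) / (2 * γ)))) := by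
  have hsub : {x | t < anisotropicWeight γ ε x} ⊆
      {x : E × ℝ | ‖x.1‖ ^ 4 + x.2 ^ 2 < t ^ (-(2 / γ))} := by
    intro x (hx : t < anisotropicWeight γ ε x)
    have hb := anisotropicWeight_base_pos hε x
    have hlt := rpow_lt_rpow_of_neg ht hx (by simp [hγ] : -(2 / γ) < 0)
    rw [anisotropicWeight, ← rpow_mul hb.le, show -(γ / 2) * -(2 / γ) = 1 by field_simp,
      rpow_one] at hlt
    change ‖x.1‖ ^ 4 + x.2 ^ 2 < t ^ (-(2 / γ))
    nlinarith [sq_nonneg ‖x.1‖, hε.le]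
  refine (measure_mono hsub).trans ((measure_setOf_norm_pow_four_add_sq_lt_le μ
    (rpow_pos_of_pos ht _)).trans_eq ?_)
  rw [← rpow_mul ht.le]
  congr 3
  field_simp
  ring

theorem setIntegral_anisotropicWeight_le (hγ : 0 < γ) {s : Set (E × ℝ)}
    (hs : μ.prod volume s ≠ ∞) (hε₀ : 0 < ε) (hε₁ : ε ≤ 1) :
    ∫ x in s, anisotropicWeight γ ε x ∂μ.prod volume ≤ (μ.prod volume).real s +
      2 * μ.real (ball 0 1) *
        ∫ t in Ioc 1 (ε ^ (-γ)), t ^ (-(((finrank ℝ E : ℝ) + 2) / (2 * γ))) := by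
  have : IsFiniteMeasure ((μ.prod volume).restrict s) := isFiniteMeasure_restrict.2 hs
  have hT : 1 ≤ ε ^ (-γ) := one_le_rpow_of_pos_of_le_one_of_nonpos hε₀ hε₁ (by linarith)
  have hint : IntegrableOn (fun t : ℝ => t ^ (-(((finrank ℝ E : ℝ) + 2) / (2 * γ))))
      (Ioc 1 (ε ^ (-γ))) :=
    (intervalIntegral.intervalIntegrable_rpow
      (.inr fun h => by rw [uIcc_of_le hT] at h; linarith [h.1])).1
  have h := integral_le_measureReal_add_integral_of_meas_lt_le (ν := (μ.prod volume).restrict s)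
    hT anisotropicWeight_nonneg (anisotropicWeight_le hγ hε₀)
    (continuous_anisotropicWeight hε₀).aemeasurable (hint.const_mul (2 * μ.real (ball 0 1)))
    (fun t ht => mul_nonneg (by positivity) (rpow_nonneg (zero_lt_one.trans ht.1).le _))
    fun t ht => (Measure.restrict_apply_le _ _).trans
      (measure_lt_anisotropicWeight_le μ hγ hε₀ (zero_lt_one.trans ht.1))
  rwa [measureReal_restrict_apply_univ, integral_const_mul] at h

variable {s : Set (E × ℝ)}

theorem exists_setIntegral_anisotropicWeight_le_of_lt (hγ : 0 < γ) (hs : μ.prod volume s ≠ ∞)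
    (h : 2 * γ < finrank ℝ E + 2) :
    ∃ C, 0 < C ∧ ∀ ε ∈ Ioo (0 : ℝ) 1, ∫ x in s, anisotropicWeight γ ε x ∂μ.prod volume ≤ C := by
  set p := ((finrank ℝ E : ℝ) + 2) / (2 * γ)
  have hp : 1 < p := (one_lt_div (by positivity)).2 h
  refine ⟨(μ.prod volume).real s + 2 * μ.real (ball 0 1) * (1 / (p - 1)),
    add_pos_of_nonneg_of_pos measureReal_nonneg
      (mul_pos (mul_pos two_pos (measureReal_ball_pos μ 0 one_pos))
        (one_div_pos.2 (sub_pos.2 hp))),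
    fun ε hε => ?_⟩
  grw [setIntegral_anisotropicWeight_le μ hγ hs hε.1 hε.2.le,
    integral_Ioc_one_rpow_neg_le_of_one_lt hp
      (one_le_rpow_of_pos_of_le_one_of_nonpos hε.1 hε.2.le (by linarith))]

theorem exists_setIntegral_anisotropicWeight_le_log (hγ : 0 < γ) (hs : μ.prod volume s ≠ ∞)
    (h : 2 * γ = finrank ℝ E + 2) :
    ∃ C, 0 < C ∧ ∀ ε ∈ Ioo (0 : ℝ) (1 / 4),
      ∫ x in s, anisotropicWeight γ ε x ∂μ.prod volume ≤ C * log (1 / ε) := by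
  have hp : ((finrank ℝ E : ℝ) + 2) / (2 * γ) = 1 := by rw [← h]; exact div_self (by positivity)
  refine ⟨(μ.prod volume).real s + 2 * μ.real (ball 0 1) * γ,
    add_pos_of_nonneg_of_pos measureReal_nonneg
      (mul_pos (mul_pos two_pos (measureReal_ball_pos μ 0 one_pos)) hγ),
    fun ε ⟨hε₀, hε₁⟩ => ?_⟩
  have hT : 1 ≤ ε ^ (-γ) := one_le_rpow_of_pos_of_le_one_of_nonpos hε₀ (by linarith) (by linarith)
  have hlog : 1 ≤ log (1 / ε) := by
    rw [le_log_iff_exp_le (by positivity), le_div_iff₀ hε₀]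
    nlinarith [exp_one_lt_d9]
  have hlogT : log (ε ^ (-γ)) = γ * log (1 / ε) := by
    rw [log_rpow hε₀, one_div, log_inv]; ring
  have := setIntegral_anisotropicWeight_le μ hγ hs hε₀ (by linarith)
  rw [hp, integral_Ioc_one_rpow_neg_one hT, hlogT] at this
  nlinarith [measureReal_nonneg (μ := μ.prod volume) (s := s)]

theorem exists_setIntegral_anisotropicWeight_le_rpow (hγ : 0 < γ) (hs : μ.prod volume s ≠ ∞)
    (h : finrank ℝ E + 2 < 2 * γ) :
    ∃ C, 0 < C ∧ ∀ ε ∈ Ioo (0 : ℝ) 1, ∫ x in s, anisotropicWeight γ ε x ∂μ.prod volume ≤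
      C * ε ^ (((finrank ℝ E : ℝ) + 2) / 2 - γ) := by
  set p := ((finrank ℝ E : ℝ) + 2) / (2 * γ)
  have hp : p < 1 := (div_lt_one (by positivity)).2 h
  refine ⟨(μ.prod volume).real s + 2 * μ.real (ball 0 1) * (1 / (1 - p)),
    add_pos_of_nonneg_of_pos measureReal_nonneg
      (mul_pos (mul_pos two_pos (measureReal_ball_pos μ 0 one_pos))
        (one_div_pos.2 (sub_pos.2 hp))),
    fun ε ⟨hε₀, hε₁⟩ => ?_⟩
  have hT : 1 ≤ ε ^ (-γ) := one_le_rpow_of_pos_of_le_one_of_nonpos hε₀ hε₁.le (by linarith)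
  have hTp : (ε ^ (-γ)) ^ (1 - p) = ε ^ (((finrank ℝ E : ℝ) + 2) / 2 - γ) := by
    rw [← rpow_mul hε₀.le]; congr 1; simp only [p]; field_simp; ring
  have hε : 1 ≤ ε ^ (((finrank ℝ E : ℝ) + 2) / 2 - γ) :=
    one_le_rpow_of_pos_of_le_one_of_nonpos hε₀ hε₁.le (by linarith)
  have := setIntegral_anisotropicWeight_le μ hγ hs hε₀ hε₁.le
  grw [integral_Ioc_one_rpow_neg_le_of_lt_one hp hT, hTp] at this
  calc _ ≤ _ := this
    _ ≤ (μ.prod volume).real s * ε ^ (((finrank ℝ E : ℝ) + 2) / 2 - γ) +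
          2 * μ.real (ball 0 1) * (ε ^ (((finrank ℝ E : ℝ) + 2) / 2 - γ) / (1 - p)) := by
      gcongr; exact le_mul_of_one_le_right measureReal_nonneg hε
    _ = _ := by ring

end HaarMeasure

theorem stmt3_general (ℓ : ℕ) (hℓ : 1 ≤ ℓ) (γ r : ℝ) (hγ : 0 < γ) :
    ∃ C : ℝ, 0 < C ∧ ∀ ε ∈ Set.Ioo (0 : ℝ) (1 / 4),
      (2 * γ < (ℓ : ℝ) + 1 →
        (∫ l in {x : EuclideanSpace ℝ (Fin (ℓ - 1)) × ℝ | ‖x.1‖ ^ 2 + x.2 ^ 2 < r ^ 2},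
          ((‖l.1‖ ^ 2 + ε) ^ 2 + l.2 ^ 2) ^ (-(γ / 2))) ≤ C) ∧
      (2 * γ = (ℓ : ℝ) + 1 →
        (∫ l in {x : EuclideanSpace ℝ (Fin (ℓ - 1)) × ℝ | ‖x.1‖ ^ 2 + x.2 ^ 2 < r ^ 2},
          ((‖l.1‖ ^ 2 + ε) ^ 2 + l.2 ^ 2) ^ (-(γ / 2))) ≤ C * Real.log (1 / ε)) ∧
      ((ℓ : ℝ) + 1 < 2 * γ →
        (∫ l in {x : EuclideanSpace ℝ (Fin (ℓ - 1)) × ℝ | ‖x.1‖ ^ 2 + x.2 ^ 2 < r ^ 2},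
          ((‖l.1‖ ^ 2 + ε) ^ 2 + l.2 ^ 2) ^ (-(γ / 2))) ≤
            C * ε ^ (((ℓ : ℝ) + 1) / 2 - γ)) := by
  have hdim : (ℓ : ℝ) + 1 = finrank ℝ (EuclideanSpace ℝ (Fin (ℓ - 1))) + 2 := by
    rw [finrank_euclideanSpace_fin, Nat.cast_sub hℓ]; push_cast; ring
  have hB := (isBounded_setOf_norm_sq_add_sq_lt (E := EuclideanSpace ℝ (Fin (ℓ - 1))) r
    ).measure_lt_top (μ := volume).ne
  have hsmall : Ioo (0 : ℝ) (1 / 4) ⊆ Ioo 0 1 := Ioo_subset_Ioo_right (by norm_num)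
  rw [hdim]
  rcases lt_trichotomy (2 * γ) (finrank ℝ (EuclideanSpace ℝ (Fin (ℓ - 1))) + 2) with h | h | h
  · obtain ⟨C, hC, hbound⟩ := exists_setIntegral_anisotropicWeight_le_of_lt volume hγ hB h
    exact ⟨C, hC, fun ε hε =>
      ⟨fun _ => hbound ε (hsmall hε), fun h' => absurd h' h.ne, fun h' => absurd h' h.not_gt⟩⟩
  · obtain ⟨C, hC, hbound⟩ := exists_setIntegral_anisotropicWeight_le_log volume hγ hB h
    exact ⟨C, hC, fun ε hε =>
      ⟨fun h' => absurd h h'.ne, fun _ => hbound ε hε, fun h' => absurd h h'.ne'⟩⟩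
  · obtain ⟨C, hC, hbound⟩ := exists_setIntegral_anisotropicWeight_le_rpow volume hγ hB h
    exact ⟨C, hC, fun ε hε =>
      ⟨fun h' => absurd h h'.not_gt, fun h' => absurd h' h.ne', fun _ => hbound ε (hsmall hε)⟩⟩

/-- the anisotropic integral estimates for
`F_ε(λ) = [(|λ'|² + ε)² + λ_ℓ²]^{-γ/2}` over the ball `B = {|λ| < r}`. -/
theorem stmt3 (ℓ : ℕ) (hℓ : 1 ≤ ℓ) (γ r : ℝ) (hγ : 0 < γ) (hr : 0 < r) :
    ∃ C : ℝ, 0 < C ∧ ∀ ε ∈ Set.Ioo (0 : ℝ) (1 / 4),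
      (2 * γ < (ℓ : ℝ) + 1 →
        (∫ l in {x : EuclideanSpace ℝ (Fin (ℓ - 1)) × ℝ | ‖x.1‖ ^ 2 + x.2 ^ 2 < r ^ 2},
          ((‖l.1‖ ^ 2 + ε) ^ 2 + l.2 ^ 2) ^ (-(γ / 2))) ≤ C) ∧
      (2 * γ = (ℓ : ℝ) + 1 →
        (∫ l in {x : EuclideanSpace ℝ (Fin (ℓ - 1)) × ℝ | ‖x.1‖ ^ 2 + x.2 ^ 2 < r ^ 2},
          ((‖l.1‖ ^ 2 + ε) ^ 2 + l.2 ^ 2) ^ (-(γ / 2))) ≤ C * Real.log (1 / ε)) ∧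
      ((ℓ : ℝ) + 1 < 2 * γ →
        (∫ l in {x : EuclideanSpace ℝ (Fin (ℓ - 1)) × ℝ | ‖x.1‖ ^ 2 + x.2 ^ 2 < r ^ 2},
          ((‖l.1‖ ^ 2 + ε) ^ 2 + l.2 ^ 2) ^ (-(γ / 2))) ≤
            C * ε ^ (((ℓ : ℝ) + 1) / 2 - γ)) :=
  stmt3_general ℓ hℓ γ r hγ
end

section
/- Let a* be a Euclidean space with inner product ⟨·,·⟩, ρ ∈ a* nonzero, and define Q(ζ) = ⟨ζ, ζ⟩ + ⟨ρ, ρ⟩ for ζ in the complexification, where ⟨·,·⟩ is extended bilinearly. Let η ∈ a* with |η| = |ρ| and ε ∈ (0, 1/4). Then, writing λ = (λ', λ_η) where λ_η is the component of λ along η, we have |Q(λ + i(1-ε)η)|² = [λ_η² + |λ'|² + (2ε - ε²)|ρ|²]² + 4(1-ε)²|ρ|² λ_η², and there exists a constant C > 0 (independent of ε, η, λ) such that |Q(λ + i(1-ε)η)|² ≥ C [(|λ'|² + ε)² + λ_η²] for all λ in the ball {|λ| < |ρ|}. -/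
open Real
open scoped RealInnerProductSpace

/-!
With `a = ⟪λ, η⟫ / |η|` and `s = |λ|² - a² = |λ'|²`, the real part of `Q(λ + i(1-ε)η)` is
`a² + s + (2ε - ε²)|ρ|²` and its imaginary part is `2(1-ε)|ρ| a`, which gives the formula.
For `ε < 1/4` the real part is at least `min 1 (7/4 |ρ|²) · (s + ε)` and the square of the
imaginary part is at least `9/4 |ρ|² a²`, which gives the lower bound.
-/

section Component

variable {V : Type*} [NormedAddCommGroup V] [InnerProductSpace ℝ V]

lemma inner_div_norm_mul_norm (l η : V) : ⟪l, η⟫ / ‖η‖ * ‖η‖ = ⟪l, η⟫ :=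
  div_mul_cancel_of_imp fun h => by simp [norm_eq_zero.mp h]

lemma sq_inner_div_norm_le (l η : V) : (⟪l, η⟫ / ‖η‖) ^ 2 ≤ ‖l‖ ^ 2 := by
  rw [div_pow]
  refine div_le_of_le_mul₀ (sq_nonneg _) (sq_nonneg _) ?_
  rw [← mul_pow, ← sq_abs]
  exact pow_le_pow_left₀ (abs_nonneg _) (abs_real_inner_le_norm l η) 2

lemma norm_sq_Q_eq (ρ η l : V) (hη : ‖η‖ = ‖ρ‖) (ε : ℝ) :
    ‖(((‖l‖ ^ 2 - ‖(1 - ε) • η‖ ^ 2 + ‖ρ‖ ^ 2 : ℝ) : ℂ) +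
        ((2 * ⟪l, (1 - ε) • η⟫ : ℝ) : ℂ) * Complex.I)‖ ^ 2 =
      ((⟪l, η⟫ / ‖η‖) ^ 2 + (‖l‖ ^ 2 - (⟪l, η⟫ / ‖η‖) ^ 2) +
          (2 * ε - ε ^ 2) * ‖ρ‖ ^ 2) ^ 2 +
        4 * (1 - ε) ^ 2 * ‖ρ‖ ^ 2 * (⟪l, η⟫ / ‖η‖) ^ 2 := by
  have h := inner_div_norm_mul_norm l η
  set a := ⟪l, η⟫ / ‖η‖
  rw [Complex.sq_norm, Complex.normSq_add_mul_I, real_inner_smul_right, ← h, norm_smul,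
    Real.norm_eq_abs, mul_pow, sq_abs, hη]
  ring

end Component

lemma real_part_lower_bound {R s ε c : ℝ} (hs : 0 ≤ s) (hε₀ : 0 ≤ ε) (hε₁ : ε ≤ 1 / 4)
    (hc₁ : c ≤ 1) (hcR : c ≤ 7 / 4 * R ^ 2) :
    c * (s + ε) ≤ s + (2 * ε - ε ^ 2) * R ^ 2 := by
  nlinarith [mul_nonneg hs (sub_nonneg.mpr hc₁), mul_nonneg hε₀ (sub_nonneg.mpr hcR),
    mul_nonneg (mul_nonneg hε₀ (by linarith : (0 : ℝ) ≤ 1 / 4 - ε)) (sq_nonneg R)]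

lemma norm_sq_Q_lower_bound {R s a ε : ℝ} (hs : 0 ≤ s) (hε₀ : 0 < ε) (hε₁ : ε ≤ 1 / 4) :
    min (min 1 (7 / 4 * R ^ 2) ^ 2) (9 / 4 * R ^ 2) * ((s + ε) ^ 2 + a ^ 2) ≤
      (a ^ 2 + s + (2 * ε - ε ^ 2) * R ^ 2) ^ 2 + 4 * (1 - ε) ^ 2 * R ^ 2 * a ^ 2 := by
  set c := min 1 (7 / 4 * R ^ 2)
  have hc₀ : 0 ≤ c := le_min zero_le_one (by positivity)
  have hre : c * (s + ε) ≤ a ^ 2 + s + (2 * ε - ε ^ 2) * R ^ 2 := by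
    have := real_part_lower_bound (R := R) hs hε₀.le hε₁ (min_le_left _ _) (min_le_right _ _)
    nlinarith [sq_nonneg a]
  have hre_sq : c ^ 2 * (s + ε) ^ 2 ≤ (a ^ 2 + s + (2 * ε - ε ^ 2) * R ^ 2) ^ 2 := by
    rw [← mul_pow]
    exact pow_le_pow_left₀ (by positivity) hre 2
  have him : 9 / 4 * R ^ 2 * a ^ 2 ≤ 4 * (1 - ε) ^ 2 * R ^ 2 * a ^ 2 := by
    gcongr
    nlinarith
  calc min (c ^ 2) (9 / 4 * R ^ 2) * ((s + ε) ^ 2 + a ^ 2)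
      = min (c ^ 2) (9 / 4 * R ^ 2) * (s + ε) ^ 2 + min (c ^ 2) (9 / 4 * R ^ 2) * a ^ 2 := by
        ring
    _ ≤ c ^ 2 * (s + ε) ^ 2 + 9 / 4 * R ^ 2 * a ^ 2 := by
        gcongr
        exacts [min_le_left _ _, min_le_right _ _]
    _ ≤ _ := add_le_add hre_sq him

/-- explicit formula and lower bound for `|Q(λ + i(1-ε)η)|²`, where
`Q(ζ) = ⟨ζ,ζ⟩ + ⟨ρ,ρ⟩` (bilinear extension), `|η| = |ρ|`, `ε ∈ (0,1/4)`, and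
`λ = (λ', λ_η)` with `λ_η` the component of `λ` along `η`. -/
theorem stmt4 {V : Type*} [NormedAddCommGroup V] [InnerProductSpace ℝ V]
    (ρ : V) (hρ : ρ ≠ 0) :
    (∀ η : V, ‖η‖ = ‖ρ‖ → ∀ ε ∈ Set.Ioo (0 : ℝ) (1 / 4), ∀ l : V,
      ‖
          (((‖l‖ ^ 2 - ‖(1 - ε) • η‖ ^ 2 + ‖ρ‖ ^ 2 : ℝ) : ℂ) +
            ((2 * ⟪l, (1 - ε) • η⟫ : ℝ) : ℂ) * Complex.I)‖ ^ 2 =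
        ((⟪l, η⟫ / ‖η‖) ^ 2 + (‖l‖ ^ 2 - (⟪l, η⟫ / ‖η‖) ^ 2) +
            (2 * ε - ε ^ 2) * ‖ρ‖ ^ 2) ^ 2 +
          4 * (1 - ε) ^ 2 * ‖ρ‖ ^ 2 * (⟪l, η⟫ / ‖η‖) ^ 2) ∧
    (∃ C : ℝ, 0 < C ∧ ∀ η : V, ‖η‖ = ‖ρ‖ → ∀ ε ∈ Set.Ioo (0 : ℝ) (1 / 4), ∀ l : V,
      ‖l‖ < ‖ρ‖ →
        C * (((‖l‖ ^ 2 - (⟪l, η⟫ / ‖η‖) ^ 2) + ε) ^ 2 + (⟪l, η⟫ / ‖η‖) ^ 2) ≤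
          ‖
              (((‖l‖ ^ 2 - ‖(1 - ε) • η‖ ^ 2 + ‖ρ‖ ^ 2 : ℝ) : ℂ) +
                ((2 * ⟪l, (1 - ε) • η⟫ : ℝ) : ℂ) * Complex.I)‖ ^ 2) := by
  have hR : 0 < ‖ρ‖ := norm_pos_iff.mpr hρ
  refine ⟨fun η hη ε _ l => norm_sq_Q_eq ρ η l hη ε, ?_⟩
  refine ⟨min (min 1 (7 / 4 * ‖ρ‖ ^ 2) ^ 2) (9 / 4 * ‖ρ‖ ^ 2), by positivity, ?_⟩
  rintro η hη ε ⟨hε₀, hε₁⟩ l -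
  rw [norm_sq_Q_eq ρ η l hη ε]
  exact norm_sq_Q_lower_bound (sub_nonneg.mpr (sq_inner_div_norm_le l η)) hε₀ hε₁.le
end

section
/- Let c₀, c₁ > 0 with c₀ c₁ > 1, and define the cone Γ_c = {(H', H_ℓ) ∈ ℝ^{ℓ-1} × ℝ : |H'| < c H_ℓ}. Suppose x ∉ Γ_{c₁} ∪ (-Γ_{c₁}), y ∈ Γ_{1/c₀}, and x + y ∈ Γ_{1/c₀}. Then y_ℓ > ((c₀ - 1/c₁)/4) |x'| + ((c₀ c₁ - 1)/4) |x_ℓ|. -/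
/-!
Subtracting the cone conditions for `y` and `x + y` and using the triangle inequality
`‖x'‖ ≤ ‖x' + y'‖ + ‖y'‖` gives `c₀ ‖x'‖ < x_ℓ + 2 y_ℓ`. Since `x` lies outside `±Γ_{c₁}`,
`x_ℓ ≤ ‖x'‖ / c₁`, hence `2 y_ℓ > (c₀ - 1/c₁) ‖x'‖`; and as `c₀ - 1/c₁ = (c₀ c₁ - 1) / c₁`,
half of this term dominates `(c₀ c₁ - 1) |x_ℓ| / 2`.
-/

theorem mul_norm_lt_of_mem_cone_of_add_mem_cone {E : Type*} [SeminormedAddCommGroup E]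
    {c r s : ℝ} {u v : E} (hc : 0 ≤ c) (hv : c * ‖v‖ < s) (huv : c * ‖u + v‖ < r + s) :
    c * ‖u‖ < r + 2 * s := by
  have htri : ‖u‖ ≤ ‖u + v‖ + ‖v‖ := by
    simpa using norm_sub_le (u + v) v
  calc c * ‖u‖ ≤ c * (‖u + v‖ + ‖v‖) := mul_le_mul_of_nonneg_left htri hc
    _ < r + 2 * s := by linarith

theorem sub_one_mul_abs_le_sub_one_div_mul {a b c₀ c₁ : ℝ} (hc₁ : 0 < c₁) (h : 1 ≤ c₀ * c₁)
    (hab : c₁ * |b| ≤ a) : (c₀ * c₁ - 1) * |b| ≤ (c₀ - 1 / c₁) * a := by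
  have hcoef : c₀ - 1 / c₁ = (c₀ * c₁ - 1) / c₁ := by field_simp
  rw [hcoef, div_mul_eq_mul_div, le_div_iff₀ hc₁, mul_assoc, mul_comm |b|]
  exact mul_le_mul_of_nonneg_left hab (by linarith)

/-- if `x ∉ Γ_{c₁} ∪ (-Γ_{c₁})` (i.e. `|x'| ≥ c₁|x_ℓ|`), `y ∈ Γ_{1/c₀}`
(i.e. `c₀|y'| < y_ℓ`) and `x + y ∈ Γ_{1/c₀}`, with `c₀c₁ > 1`, then
`y_ℓ > ((c₀ - 1/c₁)/4)|x'| + ((c₀c₁ - 1)/4)|x_ℓ|`. -/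
theorem stmt8 (ℓ : ℕ) (c₀ c₁ : ℝ) (hc₀ : 0 < c₀) (hc₁ : 0 < c₁) (h : 1 < c₀ * c₁)
    (x y : EuclideanSpace ℝ (Fin (ℓ - 1)) × ℝ)
    (hx : c₁ * |x.2| ≤ ‖x.1‖)
    (hy : c₀ * ‖y.1‖ < y.2)
    (hxy : c₀ * ‖x.1 + y.1‖ < x.2 + y.2) :
    ((c₀ - 1 / c₁) / 4) * ‖x.1‖ + ((c₀ * c₁ - 1) / 4) * |x.2| < y.2 := by
  have hsum : c₀ * ‖x.1‖ < x.2 + 2 * y.2 :=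
    mul_norm_lt_of_mem_cone_of_add_mem_cone hc₀.le hy hxy
  have hx₂ : x.2 ≤ 1 / c₁ * ‖x.1‖ := by
    rw [one_div_mul_eq_div, le_div_iff₀ hc₁, mul_comm]
    exact (mul_le_mul_of_nonneg_left (le_abs_self _) hc₁.le).trans hx
  have hcoef := sub_one_mul_abs_le_sub_one_div_mul hc₁ h.le hx
  linarith
end

section
/- Let J ≥ 0 be an integer and κ ≥ 0. Suppose M is holomorphic on a domain P ⊆ ℂ and satisfies |M^{(j)}(z)| ≤ A / min(|z|^{κ+j}, |z|^j) for all z ∈ P and 0 ≤ j ≤ J. Let Q(ζ) = ⟨ζ,ζ⟩ + ⟨ρ,ρ⟩ on the complexification of a Euclidean space a* (bilinear extension), and suppose T is a tube region on which Q takes values in P and on which |ζ| ≤ C₀ (bounded region) implies |Q(ζ)| ≤ C₀' and |ζ| ≥ C₀ implies |Q(ζ)| ≥ c|ζ|². Then there is a constant C such that for every multiindex I with |I| ≤ J and all ζ ∈ T: |D^I(M∘Q)(ζ)| ≤ C·A·|Q(ζ)|^{-κ-|I|} on the bounded part {|ζ| < C₀} of T, and |D^I(M∘Q)(ζ)| ≤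 C·A·|Q(ζ)|^{-|I|/2} on the unbounded part {|ζ| ≥ C₀} of T. -/
open Real

/-- Partial complex derivative in the `j`-th coordinate direction. -/
noncomputable def partialD {m : ℕ} (j : Fin m) (f : (Fin m → ℂ) → ℂ) : (Fin m → ℂ) → ℂ :=
  fun ζ => fderiv ℂ f ζ (Pi.single j 1)

/-- Iterated partial derivative `D^I` for a multiindex `I`. -/
noncomputable def multiD {m : ℕ} (I : Fin m → ℕ) (f : (Fin m → ℂ) → ℂ) : (Fin m → ℂ) → ℂ :=
  (List.finRange m).foldr (fun j g => (partialD j)^[I j] g) f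

/-!
Differentiating `M ∘ Q` with `∂ⱼ Q = 2 ζⱼ` shows, by induction on `|I|`, that `D^I (M ∘ Q)` is a
linear combination of terms `ζ^e M⁽ᵏ⁾(Q ζ)` with `|e| + |I| = 2k` and `k ≤ |I|`. Such a term is
at most `‖ζ‖^|e| · A / min(|Q|^(κ+k), |Q|^k)`. Where `‖ζ‖ < C₀` both `‖ζ‖` and `|Q|` are bounded,
which gives `|Q|^(-κ-|I|)`; where `‖ζ‖ ≥ C₀` we have `‖ζ‖^|e| ≲ |Q|^(|e|/2)` and `|Q|` is bounded
below, which gives `|Q|^(|e|/2 - k) = |Q|^(-|I|/2)`. There are finitely many `I` with `|I| ≤ J`,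
so the constant can be taken uniform.
-/

open Asymptotics Filter Set

lemma Finset.prod_pow_update {ι R : Type*} [Fintype ι] [DecidableEq ι] [CommMonoid R]
    (x : ι → R) (e : ι → ℕ) (j : ι) (v : ℕ) :
    ∏ i, x i ^ Function.update e j v i = x j ^ v * ∏ i ∈ univ.erase j, x i ^ e i := by
  simp [Function.apply_update (fun i n => x i ^ n), prod_update_of_mem, sdiff_singleton_eq_erase]

lemma Finset.sum_update_add {ι M : Type*} [Fintype ι] [DecidableEq ι] [AddCommMonoid M]
    (f : ι → M) (j : ι) (v : M) : ∑ i, Function.update f j v i + f j = v + ∑ i, f i := by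
  rw [sum_update_of_mem (mem_univ j), ← add_sum_erase univ f (mem_univ j),
    sdiff_singleton_eq_erase]
  abel

section PartialDerivatives

variable {m : ℕ} {j : Fin m} {f g : (Fin m → ℂ) → ℂ} {ζ : Fin m → ℂ}

lemma partialD_add (hf : DifferentiableAt ℂ f ζ) (hg : DifferentiableAt ℂ g ζ) :
    partialD j (f + g) ζ = partialD j f ζ + partialD j g ζ := by
  simp [partialD, fderiv_add hf hg]

lemma partialD_smul (hf : DifferentiableAt ℂ f ζ) (a : ℂ) :
    partialD j (a • f) ζ = a * partialD j f ζ := by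
  simp [partialD, fderiv_const_smul hf]

lemma partialD_mul (hf : DifferentiableAt ℂ f ζ) (hg : DifferentiableAt ℂ g ζ) :
    partialD j (fun z => f z * g z) ζ = partialD j f ζ * g ζ + f ζ * partialD j g ζ := by
  simp only [partialD, fderiv_fun_mul hf hg, add_apply, smul_apply, smul_eq_mul]
  ring

lemma partialD_comp {h : ℂ → ℂ} (hh : DifferentiableAt ℂ h (f ζ)) (hf : DifferentiableAt ℂ f ζ) :
    partialD j (fun z => h (f z)) ζ = deriv h (f ζ) * partialD j f ζ := by
  have : HasFDerivAt (fun z => h (f z)) (deriv h (f ζ) • fderiv ℂ f ζ) ζ :=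
    hh.hasDerivAt.comp_hasFDerivAt ζ hf.hasFDerivAt
  simp [partialD, this.fderiv]

lemma partialD_congr_of_eqOn {U : Set (Fin m → ℂ)} (hU : IsOpen U) (hfg : EqOn f g U) :
    EqOn (partialD j f) (partialD j g) U := fun ζ hζ => by
  simp only [partialD, (eventuallyEq_of_mem (hU.mem_nhds hζ) hfg).fderiv_eq]

lemma partialD_prod_pow (e : Fin m → ℕ) :
    partialD j (fun z => ∏ i, z i ^ e i) ζ = e j * ∏ i, ζ i ^ Function.update e j (e j - 1) i := by
  have := HasFDerivAt.finsetProd (u := Finset.univ) (g := fun i (z : Fin m → ℂ) => z i ^ e i)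
    fun i _ => (hasDerivAt_pow (e i) (ζ i)).comp_hasFDerivAt ζ (hasFDerivAt_apply (𝕜 := ℂ) i ζ)
  simp only [partialD, this.fderiv, sum_apply, smul_apply, ContinuousLinearMap.proj_apply,
    Pi.single_apply, smul_eq_mul, mul_ite, mul_one, mul_zero, Finset.sum_ite_eq', Finset.mem_univ,
    ↓reduceIte, Finset.prod_pow_update]
  ring

lemma multiD_induction {R : ℕ → ((Fin m → ℂ) → ℂ) → Prop}
    (step : ∀ n j f, R n f → R (n + 1) (partialD j f)) {n : ℕ} (hf : R n f) (I : Fin m → ℕ) :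
    R (n + ∑ j, I j) (multiD I f) := by
  have iterate : ∀ j k n f, R n f → R (n + k) ((partialD j)^[k] f) := by
    intro j k
    induction k with
    | zero => exact fun _ _ h => h
    | succ k ih =>
      intro n f h
      rw [Function.iterate_succ_apply', ← add_assoc]
      exact step _ _ _ (ih n f h)
  rw [multiD, Fin.sum_univ_def]
  induction List.finRange m with
  | nil => simpa using hf
  | cons j l ih =>
    rw [List.foldr_cons, List.map_cons, List.sum_cons, add_left_comm, add_comm (I j)]
    exact iterate _ _ _ _ ih

end PartialDerivatives

section FaaDiBruno

variable {m : ℕ} {M : ℂ → ℂ} {P : Set ℂ} {c : ℂ}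

def sumSqAdd (c : ℂ) (ζ : Fin m → ℂ) : ℂ := ∑ j, ζ j ^ 2 + c

lemma partialD_sumSqAdd (j : Fin m) (ζ : Fin m → ℂ) : partialD j (sumSqAdd c) ζ = 2 * ζ j := by
  have := (HasFDerivAt.fun_sum (u := Finset.univ) (A := fun i (z : Fin m → ℂ) => z i ^ 2)
    fun i _ => (hasDerivAt_pow 2 (ζ i)).comp_hasFDerivAt ζ
      (hasFDerivAt_apply (𝕜 := ℂ) i ζ)).add_const c
  simp [partialD, show sumSqAdd c = fun z : Fin m → ℂ => ∑ i, z i ^ 2 + c from rfl, this.fderiv,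
    Pi.single_apply]

lemma differentiable_sumSqAdd : Differentiable ℂ (sumSqAdd (m := m) c) := by
  unfold sumSqAdd; fun_prop

noncomputable def faaDiBrunoTerm (M : ℂ → ℂ) (c : ℂ) (e : Fin m → ℕ) (k : ℕ) : (Fin m → ℂ) → ℂ :=
  fun ζ => (∏ i, ζ i ^ e i) * iteratedDeriv k M (sumSqAdd c ζ)

/-- In the paper's notation these are the terms `ζ^{I-2P} M^{(|I|-|P|)}(Q ζ)` of `D^I (M ∘ Q)`
with `|I| = n`: here `e = I - 2P` and `k = |I| - |P|`. -/
noncomputable def faaDiBrunoSpan (M : ℂ → ℂ) (c : ℂ) (n : ℕ) : Submodule ℂ ((Fin m → ℂ) → ℂ) :=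
  Submodule.span ℂ {f | ∃ e k, ∑ i, e i + n = 2 * k ∧ k ≤ n ∧ faaDiBrunoTerm M c e k = f}

lemma differentiableAt_iteratedDeriv (hP : IsOpen P) (hM : DifferentiableOn ℂ M P) (k : ℕ)
    {z : ℂ} (hz : z ∈ P) : DifferentiableAt ℂ (iteratedDeriv k M) z := by
  rw [iteratedDeriv_eq_iterate]
  exact ((hM.analyticOnNhd hP).iterated_deriv k z hz).differentiableAt

variable (hP : IsOpen P) (hM : DifferentiableOn ℂ M P)
include hP hM

lemma differentiableAt_faaDiBrunoTerm (e : Fin m → ℕ) (k : ℕ) {ζ : Fin m → ℂ}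
    (hζ : sumSqAdd c ζ ∈ P) : DifferentiableAt ℂ (faaDiBrunoTerm M c e k) ζ :=
  (by fun_prop : DifferentiableAt ℂ (fun z : Fin m → ℂ => ∏ i, z i ^ e i) ζ).mul
    ((differentiableAt_iteratedDeriv hP hM k hζ).comp ζ differentiable_sumSqAdd.differentiableAt)

lemma partialD_faaDiBrunoTerm (e : Fin m → ℕ) (k : ℕ) (j : Fin m) {ζ : Fin m → ℂ}
    (hζ : sumSqAdd c ζ ∈ P) :
    partialD j (faaDiBrunoTerm M c e k) ζ =
      e j * faaDiBrunoTerm M c (Function.update e j (e j - 1)) k ζ +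
        2 * faaDiBrunoTerm M c (Function.update e j (e j + 1)) (k + 1) ζ := by
  have hMk := differentiableAt_iteratedDeriv hP hM k hζ
  have hQ := differentiable_sumSqAdd (c := c) ζ
  unfold faaDiBrunoTerm
  rw [partialD_mul (by fun_prop) (g := fun z => iteratedDeriv k M (sumSqAdd c z))
      (hMk.comp ζ hQ),
    partialD_comp hMk hQ, partialD_prod_pow,
    partialD_sumSqAdd, ← iteratedDeriv_succ]
  simp only [Finset.prod_pow_update]
  rw [← Finset.mul_prod_erase Finset.univ (fun i => ζ i ^ e i) (Finset.mem_univ j)]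
  ring

lemma exists_partialD_eq_of_mem_faaDiBrunoSpan (j : Fin m) {n : ℕ} {g : (Fin m → ℂ) → ℂ}
    (hg : g ∈ faaDiBrunoSpan M c n) :
    ∃ g' ∈ faaDiBrunoSpan M c (n + 1), ∀ ζ, sumSqAdd c ζ ∈ P →
      DifferentiableAt ℂ g ζ ∧ partialD j g ζ = g' ζ := by
  induction hg using Submodule.span_induction with
  | mem g hg =>
    obtain ⟨e, k, hek, hkn, rfl⟩ := hg
    refine ⟨(e j : ℂ) • faaDiBrunoTerm M c (Function.update e j (e j - 1)) k +
      (2 : ℂ) • faaDiBrunoTerm M c (Function.update e j (e j + 1)) (k + 1), add_mem ?_ ?_,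
      fun ζ hζ => ⟨differentiableAt_faaDiBrunoTerm hP hM e k hζ,
        partialD_faaDiBrunoTerm hP hM e k j hζ⟩⟩
    · rcases Nat.eq_zero_or_pos (e j) with h | h
      · simp [h]
      · refine Submodule.smul_mem _ _ (Submodule.subset_span ⟨_, k, ?_, by omega, rfl⟩)
        have := Finset.sum_update_add e j (e j - 1)
        omega
    · refine Submodule.smul_mem _ _ (Submodule.subset_span ⟨_, k + 1, ?_, by omega, rfl⟩)
      have := Finset.sum_update_add e j (e j + 1)
      omega
  | zero => exact ⟨0, zero_mem _, fun ζ _ => ⟨differentiableAt_const 0, by simp [partialD]⟩⟩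
  | add g₁ g₂ _ _ ih₁ ih₂ =>
    obtain ⟨g₁', h₁, hd₁⟩ := ih₁
    obtain ⟨g₂', h₂, hd₂⟩ := ih₂
    refine ⟨g₁' + g₂', add_mem h₁ h₂, fun ζ hζ => ?_⟩
    obtain ⟨d₁, e₁⟩ := hd₁ ζ hζ
    obtain ⟨d₂, e₂⟩ := hd₂ ζ hζ
    exact ⟨d₁.add d₂, by rw [partialD_add d₁ d₂, e₁, e₂]; rfl⟩
  | smul a g _ ih =>
    obtain ⟨g', hg', hd⟩ := ih
    refine ⟨a • g', Submodule.smul_mem _ a hg', fun ζ hζ => ?_⟩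
    obtain ⟨d, e⟩ := hd ζ hζ
    exact ⟨d.const_smul a, by rw [partialD_smul d, e]; rfl⟩

lemma exists_mem_faaDiBrunoSpan_eqOn_multiD (I : Fin m → ℕ) :
    ∃ g ∈ faaDiBrunoSpan M c (∑ j, I j),
      EqOn (multiD I fun z => M (sumSqAdd c z)) g {ζ | sumSqAdd c ζ ∈ P} := by
  have hU : IsOpen {ζ : Fin m → ℂ | sumSqAdd c ζ ∈ P} :=
    hP.preimage differentiable_sumSqAdd.continuous
  have base : (fun z : Fin m → ℂ => M (sumSqAdd c z)) ∈ faaDiBrunoSpan M c 0 :=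
    Submodule.subset_span ⟨0, 0, by simp, le_rfl, by ext; simp [faaDiBrunoTerm]⟩
  simpa using multiD_induction (n := 0)
    (R := fun n f => ∃ g ∈ faaDiBrunoSpan M c n, EqOn f g {ζ | sumSqAdd c ζ ∈ P})
    (fun n j f ⟨g, hg, hfg⟩ => by
      obtain ⟨g', hg', hd⟩ := exists_partialD_eq_of_mem_faaDiBrunoSpan hP hM j hg
      exact ⟨g', hg', fun ζ hζ => (partialD_congr_of_eqOn hU hfg hζ).trans (hd ζ hζ).2⟩)
    ⟨_, base, eqOn_refl _ _⟩ I

end FaaDiBruno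

lemma isBigO_of_mem_span {α 𝕜 E F : Type*} [NormedField 𝕜] [SeminormedAddCommGroup E]
    [NormedSpace 𝕜 E] [Norm F] {l : Filter α} {φ : α → F} {S : Set (α → E)}
    (hS : ∀ g ∈ S, g =O[l] φ) {f : α → E} (hf : f ∈ Submodule.span 𝕜 S) : f =O[l] φ := by
  induction hf using Submodule.span_induction with
  | mem g hg => exact hS g hg
  | zero => exact isBigO_zero φ l
  | add _ _ _ _ h₁ h₂ => exact h₁.add h₂
  | smul a _ _ h => exact h.const_smul_left a

lemma norm_prod_pow_le {ι 𝕜 : Type*} [Fintype ι] [NormedField 𝕜] (x : ι → 𝕜) (e : ι → ℕ) :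
    ‖∏ i, x i ^ e i‖ ≤ ‖x‖ ^ ∑ i, e i := by
  rw [norm_prod, ← Finset.prod_pow_eq_pow_sum]
  gcongr with i
  rw [norm_pow]
  gcongr
  exact norm_le_pi_norm x i

/-- At `q = 0` the real power is a junk value (`0 ^ 0 = 1`, `0 ^ x = 0` otherwise); `n ≤ 2 * k`
forces `n = 0` when `k = 0`, which keeps both sides compatible there. -/
lemma inv_min_rpow_le {κ q R : ℝ} {k n : ℕ} (hκ : 0 ≤ κ) (hq : 0 ≤ q) (hqR : q ≤ R) (hR : 1 ≤ R)
    (hkn : k ≤ n) (hnk : n ≤ 2 * k) :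
    (min (q ^ (κ + k)) (q ^ (k : ℝ)))⁻¹ ≤ R ^ (κ + n) * q ^ (-(κ + n)) := by
  rcases hq.eq_or_lt with rfl | hq
  · by_cases h : κ + k = 0
    · have hk : (k : ℝ) = 0 := by linarith [(Nat.cast_nonneg k : (0 : ℝ) ≤ k)]
      obtain rfl : κ = 0 := by linarith
      obtain rfl : k = 0 := by exact_mod_cast hk
      obtain rfl : n = 0 := by omega
      simp
    · rw [zero_rpow h, min_eq_left (rpow_nonneg le_rfl _), inv_zero]
      positivity
  have hle : ∀ a, 0 ≤ a → a ≤ κ + n → q ^ a ≤ R ^ (κ + n) := fun a ha hab =>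
    (rpow_le_rpow hq.le hqR ha).trans (rpow_le_rpow_of_exponent_le hR hab)
  have hkn' : (k : ℝ) ≤ n := by exact_mod_cast hkn
  rw [rpow_neg hq.le, ← div_eq_mul_inv, le_div_iff₀ (by positivity),
    inv_mul_le_iff₀ (lt_min (by positivity) (by positivity)), min_mul_of_nonneg _ _ (by positivity)]
  refine le_min ?_ ?_
  · calc q ^ (κ + n) = q ^ (κ + k) * q ^ ((n : ℝ) - k) := by rw [← rpow_add hq]; ring_nf
      _ ≤ q ^ (κ + k) * R ^ (κ + n) := by gcongr; exact hle _ (by linarith) (by linarith)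
  · calc q ^ (κ + n) = q ^ (k : ℝ) * q ^ (κ + n - k) := by rw [← rpow_add hq]; ring_nf
      _ ≤ q ^ (k : ℝ) * R ^ (κ + n) := by gcongr; exact hle _ (by linarith) (by linarith)

lemma inv_min_rpow_le_of_le {κ ε q k : ℝ} (hκ : 0 ≤ κ) (hε : 0 < ε) (hεq : ε ≤ q) :
    (min (q ^ (κ + k)) (q ^ k))⁻¹ ≤ (min (ε ^ κ) 1)⁻¹ * q ^ (-k) := by
  have hq := hε.trans_le hεq
  have hmin : min (q ^ κ * q ^ k) (q ^ k) = min (q ^ κ) 1 * q ^ k := by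
    rw [min_mul_of_nonneg _ _ (by positivity), one_mul]
  rw [rpow_add hq, hmin, mul_inv, rpow_neg hq.le]
  gcongr

lemma pow_le_div_rpow_half {a w q : ℝ} (s : ℕ) (ha : 0 < a) (hw : 0 ≤ w) (h : a * w ^ 2 ≤ q) :
    w ^ s ≤ (q / a) ^ ((s : ℝ) / 2) := by
  calc w ^ s = (w ^ 2) ^ ((s : ℝ) / 2) := by
        rw [← rpow_natCast w 2, ← rpow_mul hw, ← rpow_natCast]; ring_nf
    _ ≤ (q / a) ^ ((s : ℝ) / 2) := by
        gcongr
        rw [le_div_iff₀ ha]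
        linarith

section Estimates

variable {m J : ℕ} {κ A : ℝ} {M : ℂ → ℂ} {P : Set ℂ} {c : ℂ} {T : Set (Fin m → ℂ)}
  (hMbound : ∀ z ∈ P, ∀ j : ℕ, j ≤ J →
    ‖iteratedDeriv j M z‖ ≤ A / min (‖z‖ ^ (κ + (j : ℝ))) (‖z‖ ^ (j : ℝ)))
  (hQT : ∀ ζ ∈ T, sumSqAdd c ζ ∈ P)
include hMbound hQT

lemma norm_faaDiBrunoTerm_le {e : Fin m → ℕ} {k : ℕ} (hk : k ≤ J) {ζ : Fin m → ℂ} (hζ : ζ ∈ T) :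
    ‖faaDiBrunoTerm M c e k ζ‖ ≤ ‖ζ‖ ^ (∑ i, e i) *
      (A * (min (‖sumSqAdd c ζ‖ ^ (κ + k)) (‖sumSqAdd c ζ‖ ^ (k : ℝ)))⁻¹) := by
  rw [faaDiBrunoTerm, norm_mul, ← div_eq_mul_inv]
  exact mul_le_mul (norm_prod_pow_le ζ e) (hMbound _ (hQT ζ hζ) k hk) (norm_nonneg _)
    (by positivity)

lemma isBigO_of_mem_faaDiBrunoSpan_of_norm_lt (hκ : 0 ≤ κ) (hA : 0 ≤ A) {C₀ C₀' : ℝ}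
    (hbdd : ∀ ζ ∈ T, ‖ζ‖ ≤ C₀ → ‖sumSqAdd c ζ‖ ≤ C₀') {n : ℕ} (hn : n ≤ J)
    {g : (Fin m → ℂ) → ℂ} (hg : g ∈ faaDiBrunoSpan M c n) :
    g =O[𝓟 {ζ ∈ T | ‖ζ‖ < C₀}] fun ζ => A * ‖sumSqAdd c ζ‖ ^ (-(κ + n)) := by
  refine isBigO_of_mem_span ?_ hg
  rintro _ ⟨e, k, hek, hkn, rfl⟩
  refine isBigO_principal.2 ⟨max C₀ 1 ^ (∑ i, e i) * max C₀' 1 ^ (κ + n), fun ζ ⟨hζT, hζ⟩ => ?_⟩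
  calc ‖faaDiBrunoTerm M c e k ζ‖
      ≤ ‖ζ‖ ^ (∑ i, e i) *
          (A * (min (‖sumSqAdd c ζ‖ ^ (κ + k)) (‖sumSqAdd c ζ‖ ^ (k : ℝ)))⁻¹) :=
        norm_faaDiBrunoTerm_le hMbound hQT (hkn.trans hn) hζT
    _ ≤ max C₀ 1 ^ (∑ i, e i) * (A * (max C₀' 1 ^ (κ + n) * ‖sumSqAdd c ζ‖ ^ (-(κ + n)))) := by
        gcongr
        · exact hζ.le.trans (le_max_left _ _)
        · exact inv_min_rpow_le hκ (norm_nonneg _) ((hbdd ζ hζT hζ.le).trans (le_max_left _ _))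
            (le_max_right _ _) hkn (by omega)
    _ = _ := by rw [Real.norm_of_nonneg (by positivity)]; ring

lemma isBigO_of_mem_faaDiBrunoSpan_of_le_norm (hκ : 0 ≤ κ) (hA : 0 ≤ A) {C₀ cc : ℝ}
    (hC₀ : 0 < C₀) (hcc : 0 < cc)
    (hgrow : ∀ ζ ∈ T, C₀ ≤ ‖ζ‖ → cc * ‖ζ‖ ^ 2 ≤ ‖sumSqAdd c ζ‖) {n : ℕ} (hn : n ≤ J)
    {g : (Fin m → ℂ) → ℂ} (hg : g ∈ faaDiBrunoSpan M c n) :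
    g =O[𝓟 {ζ ∈ T | C₀ ≤ ‖ζ‖}] fun ζ => A * ‖sumSqAdd c ζ‖ ^ (-((n : ℝ) / 2)) := by
  refine isBigO_of_mem_span ?_ hg
  rintro _ ⟨e, k, hek, hkn, rfl⟩
  set s := ∑ i, e i
  refine isBigO_principal.2 ⟨(cc ^ ((s : ℝ) / 2))⁻¹ * (min ((cc * C₀ ^ 2) ^ κ) 1)⁻¹,
    fun ζ ⟨hζT, hζ⟩ => ?_⟩
  set q := ‖sumSqAdd c ζ‖
  have hq2 := hgrow ζ hζT hζ
  have hεq : cc * C₀ ^ 2 ≤ q := le_trans (by gcongr) hq2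
  have hq : 0 < q := lt_of_lt_of_le (by positivity) hεq
  have hexp : (s : ℝ) / 2 + -(k : ℝ) = -((n : ℝ) / 2) := by
    have : (s : ℝ) + n = 2 * k := by exact_mod_cast hek
    linarith
  calc ‖faaDiBrunoTerm M c e k ζ‖
      ≤ ‖ζ‖ ^ s * (A * (min (q ^ (κ + k)) (q ^ (k : ℝ)))⁻¹) :=
        norm_faaDiBrunoTerm_le hMbound hQT (hkn.trans hn) hζT
    _ ≤ (q / cc) ^ ((s : ℝ) / 2) * (A * ((min ((cc * C₀ ^ 2) ^ κ) 1)⁻¹ * q ^ (-(k : ℝ)))) := by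
        gcongr
        · exact pow_le_div_rpow_half s hcc (norm_nonneg _) hq2
        · exact inv_min_rpow_le_of_le hκ (by positivity) hεq
    _ = (cc ^ ((s : ℝ) / 2))⁻¹ * (min ((cc * C₀ ^ 2) ^ κ) 1)⁻¹ *
          (A * (q ^ ((s : ℝ) / 2) * q ^ (-(k : ℝ)))) := by
        rw [div_rpow hq.le hcc.le]; ring
    _ = _ := by rw [← rpow_add hq, hexp, Real.norm_of_nonneg (by positivity)]

lemma exists_norm_multiD_le (hP : IsOpen P) (hM : DifferentiableOn ℂ M P) (hκ : 0 ≤ κ)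
    (hA : 0 ≤ A) {C₀ C₀' cc : ℝ} (hC₀ : 0 < C₀) (hcc : 0 < cc)
    (hbdd : ∀ ζ ∈ T, ‖ζ‖ ≤ C₀ → ‖sumSqAdd c ζ‖ ≤ C₀')
    (hgrow : ∀ ζ ∈ T, C₀ ≤ ‖ζ‖ → cc * ‖ζ‖ ^ 2 ≤ ‖sumSqAdd c ζ‖)
    {I : Fin m → ℕ} (hI : ∑ j, I j ≤ J) :
    ∃ C, ∀ ζ ∈ T,
      (‖ζ‖ < C₀ → ‖multiD I (fun z => M (sumSqAdd c z)) ζ‖ ≤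
        C * A * ‖sumSqAdd c ζ‖ ^ (-(κ + ∑ j, (I j : ℝ)))) ∧
      (C₀ ≤ ‖ζ‖ → ‖multiD I (fun z => M (sumSqAdd c z)) ζ‖ ≤
        C * A * ‖sumSqAdd c ζ‖ ^ (-((∑ j, (I j : ℝ)) / 2))) := by
  obtain ⟨g, hg, hfg⟩ := exists_mem_faaDiBrunoSpan_eqOn_multiD hP hM (c := c) I
  obtain ⟨C₁, h₁⟩ := isBigO_principal.1
    (isBigO_of_mem_faaDiBrunoSpan_of_norm_lt hMbound hQT hκ hA hbdd hI hg)
  obtain ⟨C₂, h₂⟩ := isBigO_principal.1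
    (isBigO_of_mem_faaDiBrunoSpan_of_le_norm hMbound hQT hκ hA hC₀ hcc hgrow hI hg)
  push_cast at h₁ h₂
  refine ⟨max C₁ C₂, fun ζ hζ => ⟨fun hlt => ?_, fun hle => ?_⟩⟩ <;> rw [hfg (hQT ζ hζ)]
  · refine (h₁ ζ ⟨hζ, hlt⟩).trans ?_
    rw [Real.norm_of_nonneg (by positivity), ← mul_assoc]
    gcongr
    exact le_max_left _ _
  · refine (h₂ ζ ⟨hζ, hle⟩).trans ?_
    rw [Real.norm_of_nonneg (by positivity), ← mul_assoc]
    gcongr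
    exact le_max_right _ _

end Estimates

lemma Set.Finite.exists_pos_forall_of_monotone {ι : Type*} {s : Set ι} (hs : s.Finite)
    {p : ι → ℝ → Prop} (hmono : ∀ i C C', C ≤ C' → p i C → p i C') (h : ∀ i ∈ s, ∃ C, p i C) :
    ∃ C, 0 < C ∧ ∀ i ∈ s, p i C := by
  choose! C hC using h
  obtain ⟨B, hB⟩ := (hs.image C).bddAbove
  exact ⟨max B 1, by positivity, fun i hi =>
    hmono i _ _ ((hB ⟨i, hi, rfl⟩).trans (le_max_left _ _)) (hC i hi)⟩

theorem stmt13_general (m J : ℕ) (κ : ℝ) (hκ : 0 ≤ κ) (ρsq : ℝ)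
    (M : ℂ → ℂ) (P : Set ℂ) (hPopen : IsOpen P) (hM : DifferentiableOn ℂ M P)
    (A : ℝ) (hA : 0 < A)
    (hMbound : ∀ z ∈ P, ∀ j : ℕ, j ≤ J →
      ‖iteratedDeriv j M z‖ ≤
        A / min (‖z‖ ^ (κ + (j : ℝ))) (‖z‖ ^ (j : ℝ)))
    (T : Set (Fin m → ℂ))
    (hQT : ∀ ζ ∈ T, (∑ j, ζ j ^ 2 + (ρsq : ℂ)) ∈ P)
    (C₀ C₀' cc : ℝ) (hC₀ : 0 < C₀) (hcc : 0 < cc)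
    (hbdd : ∀ ζ ∈ T, ‖ζ‖ ≤ C₀ → ‖∑ j, ζ j ^ 2 + (ρsq : ℂ)‖ ≤ C₀')
    (hgrow : ∀ ζ ∈ T, C₀ ≤ ‖ζ‖ → cc * ‖ζ‖ ^ 2 ≤ ‖∑ j, ζ j ^ 2 + (ρsq : ℂ)‖) :
    ∃ C : ℝ, 0 < C ∧ ∀ I : Fin m → ℕ, (∑ j, I j) ≤ J → ∀ ζ ∈ T,
      (‖ζ‖ < C₀ →
        ‖multiD I (fun z => M (∑ j, z j ^ 2 + (ρsq : ℂ))) ζ‖ ≤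
          C * A * ‖∑ j, ζ j ^ 2 + (ρsq : ℂ)‖ ^ (-(κ + ∑ j, (I j : ℝ)))) ∧
      (C₀ ≤ ‖ζ‖ →
        ‖multiD I (fun z => M (∑ j, z j ^ 2 + (ρsq : ℂ))) ζ‖ ≤
          C * A * ‖∑ j, ζ j ^ 2 + (ρsq : ℂ)‖ ^ (-((∑ j, (I j : ℝ)) / 2))) := by
  have hfin : {I : Fin m → ℕ | ∑ j, I j ≤ J}.Finite :=
    (Set.Finite.pi fun _ => Set.finite_Iic J).subset fun I hI i _ =>
      (Finset.single_le_sum (fun j _ => Nat.zero_le (I j)) (Finset.mem_univ i)).trans hI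
  refine hfin.exists_pos_forall_of_monotone ?_ fun I hI =>
    exists_norm_multiD_le hMbound hQT hPopen hM hκ hA.le hC₀ hcc hbdd hgrow hI
  intro I C C' hCC' h ζ hζ
  exact ⟨fun hlt => ((h ζ hζ).1 hlt).trans (by gcongr),
    fun hle => ((h ζ hζ).2 hle).trans (by gcongr)⟩

/-- Proposition 3.5: Mihlin–Hörmander type estimates for `M ∘ Q` where
`Q(ζ) = Σ ζ_j² + ⟨ρ,ρ⟩` and `M` satisfies `|M^{(j)}(z)| ≤ A / min(|z|^{κ+j}, |z|^j)`. -/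
theorem stmt13 (m J : ℕ) (κ : ℝ) (hκ : 0 ≤ κ) (ρsq : ℝ)
    (M : ℂ → ℂ) (P : Set ℂ) (hPopen : IsOpen P) (hM : DifferentiableOn ℂ M P)
    (A : ℝ) (hA : 0 < A)
    (hMbound : ∀ z ∈ P, ∀ j : ℕ, j ≤ J →
      ‖iteratedDeriv j M z‖ ≤
        A / min (‖z‖ ^ (κ + (j : ℝ))) (‖z‖ ^ (j : ℝ)))
    (T : Set (Fin m → ℂ)) (hT : IsOpen T)
    (hQT : ∀ ζ ∈ T, (∑ j, ζ j ^ 2 + (ρsq : ℂ)) ∈ P)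
    (C₀ C₀' cc : ℝ) (hC₀ : 0 < C₀) (hcc : 0 < cc)
    (hbdd : ∀ ζ ∈ T, ‖ζ‖ ≤ C₀ → ‖∑ j, ζ j ^ 2 + (ρsq : ℂ)‖ ≤ C₀')
    (hgrow : ∀ ζ ∈ T, C₀ ≤ ‖ζ‖ → cc * ‖ζ‖ ^ 2 ≤ ‖∑ j, ζ j ^ 2 + (ρsq : ℂ)‖) :
    ∃ C : ℝ, 0 < C ∧ ∀ I : Fin m → ℕ, (∑ j, I j) ≤ J → ∀ ζ ∈ T,
      (‖ζ‖ < C₀ →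
        ‖multiD I (fun z => M (∑ j, z j ^ 2 + (ρsq : ℂ))) ζ‖ ≤
          C * A * ‖∑ j, ζ j ^ 2 + (ρsq : ℂ)‖ ^ (-(κ + ∑ j, (I j : ℝ)))) ∧
      (C₀ ≤ ‖ζ‖ →
        ‖multiD I (fun z => M (∑ j, z j ^ 2 + (ρsq : ℂ))) ζ‖ ≤
          C * A * ‖∑ j, ζ j ^ 2 + (ρsq : ℂ)‖ ^ (-((∑ j, (I j : ℝ)) / 2))) :=
  stmt13_general m J κ hκ ρsq M P hPopen hM A hA hMbound T hQT C₀ C₀' cc hC₀ hcc hbdd hgrow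
end

section
/- Let ℓ ≥ 2 and |ρ| > 0. Define τ'(H', H_ℓ) = (1 + |H'|)^{1-ℓ} e^{-2|ρ| H_ℓ} for H = (H', H_ℓ) in the region R = {H : H_ℓ ≤ |H'|², |H'| < c₀ H_ℓ} (and τ' = 0 elsewhere), with respect to the measure dμ(H) = e^{2|ρ| H_ℓ} dH on the positive cone. Then τ' is not in weak-L¹(μ): writing Ω_t = {H ∈ R : τ'(H) > t}, one has sup_{t>0} t·μ(Ω_t) = ∞. -/
open MeasureTheory Real

/-!
For small `t`, the superlevel set `Ω_t` contains `K` disjoint boxes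
`{y_k / 4 < |H'| < y_k / 2} × [σ + k, σ + k + 1)`, `k < K`, where the radii are tuned by
`t y_kⁿ = e^{-2|ρ|(σ + k + 1)}` (`n = ℓ - 1`): on such a box `τ' > t`, while its `μ`-mass is at
least `e^{2|ρ|(σ + k)} y_kⁿ vol(shell) = e^{-2|ρ|} vol(shell) / t`. Taking `σ` large compared
with `K` puts the boxes inside `R`, so `t μ(Ω_t) ≥ K e^{-2|ρ|} vol(shell)` with `K` arbitrary.
-/

open Set Metric Module Function
open scoped Pointwise

namespace CartanKernel

variable {E : Type*} [NormedAddCommGroup E]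

def shell : Set E := ball 0 (1 / 2) \ closedBall 0 (1 / 4)

theorem isOpen_shell : IsOpen (shell : Set E) :=
  isOpen_ball.sdiff isClosed_closedBall

variable [NormedSpace ℝ E]

/-- The kernel `τ'` on `E × ℝ`, where `E` stands for `ℝ^{ℓ-1}`, so that `1 - ℓ = -dim E`. -/
noncomputable def tauPrime (c₀ r : ℝ) (H : E × ℝ) : ℝ :=
  if H.2 ≤ ‖H.1‖ ^ 2 ∧ ‖H.1‖ < c₀ * H.2 then
    (1 + ‖H.1‖) ^ (-(finrank ℝ E : ℝ)) * exp (-2 * r * H.2)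
  else 0

noncomputable def cartanMeasure [MeasurableSpace E] (μ : Measure E) (r : ℝ) :
    Measure (E × ℝ) :=
  (μ.prod volume).withDensity fun H => ENNReal.ofReal (exp (2 * r * H.2))

theorem shell_nonempty [Nontrivial E] : (shell : Set E).Nonempty := by
  obtain ⟨z, hz⟩ := exists_norm_eq E (show (0 : ℝ) ≤ 3 / 8 by norm_num)
  exact ⟨z, by norm_num [shell, hz]⟩

theorem norm_mem_Ioo_of_mem_smul_shell {y : ℝ} (hy : 0 < y) {x : E}
    (hx : x ∈ y • shell (E := E)) :
    y / 4 < ‖x‖ ∧ ‖x‖ < y / 2 := by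
  obtain ⟨z, ⟨hz₁, hz₂⟩, rfl⟩ := mem_smul_set.1 hx
  rw [mem_ball_zero_iff] at hz₁
  rw [mem_closedBall_zero_iff, not_le] at hz₂
  rw [norm_smul, Real.norm_of_nonneg hy.le]
  constructor <;> nlinarith

theorem smul_shell_prod_Ico_subset {c₀ r a y t : ℝ} (hc₀ : 0 ≤ c₀) (hr : 0 < r) (ha : 0 ≤ a)
    (hy : 0 < y) (ht₀ : 0 ≤ t) (hay : a + 1 ≤ (y / 4) ^ 2) (hyc : y / 2 ≤ c₀ * a)
    (ht : t * y ^ finrank ℝ E = exp (-2 * r * (a + 1))) :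
    (y • shell (E := E)) ×ˢ Ico a (a + 1) ⊆ {H | t < tauPrime c₀ r H} := by
  rintro ⟨x, s⟩ ⟨hx, hs₁, hs₂⟩
  obtain ⟨hx₁, hx₂⟩ := norm_mem_Ioo_of_mem_smul_shell hy hx
  have hsx : s ≤ ‖x‖ ^ 2 := by nlinarith
  have hxs : ‖x‖ < c₀ * s := by nlinarith
  have hxy : 1 + ‖x‖ ≤ y := by nlinarith
  show t < tauPrime c₀ r (x, s)
  rw [tauPrime, if_pos ⟨hsx, hxs⟩, rpow_neg (by positivity), rpow_natCast, inv_mul_eq_div,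
    lt_div_iff₀ (by positivity)]
  calc t * (1 + ‖x‖) ^ finrank ℝ E ≤ t * y ^ finrank ℝ E := by gcongr
    _ = exp (-2 * r * (a + 1)) := ht
    _ < exp (-2 * r * s) := exp_lt_exp.2 (by nlinarith)

theorem exists_shell_radii {c₀ r : ℝ} (hc₀ : 0 < c₀) (hr : 0 < r) {n : ℕ} (hn : 0 < n)
    (K : ℕ) :
    ∃ σ ≥ (0 : ℝ), ∃ t > (0 : ℝ), ∃ y : ℕ → ℝ, ∀ k < K, 0 < y k ∧
      σ + k + 1 ≤ (y k / 4) ^ 2 ∧ y k / 2 ≤ c₀ * (σ + k) ∧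
      t * y k ^ n = exp (-2 * r * (σ + k + 1)) := by
  set D := c₀ * exp (-2 * r * K) / 4 with hD
  have hD₀ : 0 < D := by positivity
  set σ := (K : ℝ) + 2 / D ^ 2 with hσ
  have hσD : 2 ≤ D ^ 2 * σ := by
    rw [hσ, mul_add, mul_div_cancel₀ _ (by positivity)]
    nlinarith [sq_nonneg D, (Nat.cast_nonneg K : (0 : ℝ) ≤ K)]
  have hσK : (K : ℝ) ≤ σ := le_add_of_nonneg_right (by positivity)
  have hσ₀ : 0 ≤ σ := (Nat.cast_nonneg K).trans hσK
  refine ⟨σ, hσ₀, exp (-2 * r * (σ + 1)) / (c₀ * σ) ^ n, by positivity,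
    fun k => c₀ * σ * exp (-2 * r * k / n), fun k hk => ⟨by positivity, ?_, ?_, ?_⟩⟩
  · have hkK : (k : ℝ) + 1 ≤ K := by exact_mod_cast hk
    have hkn : (k : ℝ) / n ≤ k := div_le_self (Nat.cast_nonneg k) (by exact_mod_cast hn)
    have hexp : exp (-2 * r * K) ≤ exp (-2 * r * k / n) := by
      rw [mul_div_assoc]
      exact exp_le_exp.2 (by nlinarith)
    have hDσ : D * σ ≤ c₀ * σ * exp (-2 * r * k / n) / 4 := by
      rw [hD]
      have := mul_le_mul_of_nonneg_left hexp (mul_nonneg hc₀.le hσ₀)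
      linarith
    dsimp only
    calc σ + k + 1 ≤ D ^ 2 * σ * σ := by nlinarith
      _ = (D * σ) ^ 2 := by ring
      _ ≤ _ := pow_le_pow_left₀ (by positivity) hDσ 2
  · have : exp (-2 * r * k / n) ≤ 1 := exp_le_one_iff.2 (by
      rw [mul_div_assoc]; exact mul_nonpos_of_nonpos_of_nonneg (by linarith) (by positivity))
    have : c₀ * σ * exp (-2 * r * k / n) ≤ c₀ * σ := mul_le_of_le_one_right (by positivity) this
    dsimp only
    nlinarith [(Nat.cast_nonneg k : (0 : ℝ) ≤ k)]
  · have hpow : exp (-2 * r * k / n) ^ n = exp (-2 * r * k) := by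
      rw [← exp_nat_mul, mul_div_cancel₀ _ (by exact_mod_cast hn.ne')]
    have hc : (c₀ * σ) ^ n ≠ 0 := by positivity
    dsimp only
    rw [mul_pow (c₀ * σ), hpow, ← mul_assoc, div_mul_cancel₀ _ hc, ← exp_add]
    ring_nf

variable [MeasurableSpace E] [BorelSpace E] [FiniteDimensional ℝ E]

theorem ofReal_exp_mul_measure_shell_le (μ : Measure E) [μ.IsAddHaarMeasure] {r a y t : ℝ}
    (hr : 0 ≤ r) (hy : 0 < y) (ht₀ : 0 ≤ t)
    (ht : t * y ^ finrank ℝ E = exp (-2 * r * (a + 1))) :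
    ENNReal.ofReal (exp (-2 * r)) * μ shell ≤
      ENNReal.ofReal t * cartanMeasure μ r ((y • shell (E := E)) ×ˢ Ico a (a + 1)) := by
  have hbox :
      ENNReal.ofReal (exp (2 * r * a)) * (ENNReal.ofReal (y ^ finrank ℝ E) * μ shell) ≤
      cartanMeasure μ r ((y • shell (E := E)) ×ˢ Ico a (a + 1)) := by
    calc ENNReal.ofReal (exp (2 * r * a)) * (ENNReal.ofReal (y ^ finrank ℝ E) * μ shell)
        = ∫⁻ _ in (y • shell (E := E)) ×ˢ Ico a (a + 1), ENNReal.ofReal (exp (2 * r * a))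
            ∂μ.prod volume := by
          rw [setLIntegral_const, Measure.prod_prod, Real.volume_Ico, add_sub_cancel_left,
            ENNReal.ofReal_one, mul_one, Measure.addHaar_smul_of_nonneg μ hy.le]
      _ ≤ cartanMeasure μ r ((y • shell (E := E)) ×ˢ Ico a (a + 1)) := by
          rw [cartanMeasure, withDensity_apply']
          refine setLIntegral_mono (by fun_prop) fun H hH => ?_
          exact ENNReal.ofReal_le_ofReal (exp_le_exp.2 (by nlinarith [hH.2.1]))
  calc ENNReal.ofReal (exp (-2 * r)) * μ shell
      = ENNReal.ofReal t * (ENNReal.ofReal (exp (2 * r * a)) *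
          (ENNReal.ofReal (y ^ finrank ℝ E) * μ shell)) := by
        have hweight : t * exp (2 * r * a) * y ^ finrank ℝ E = exp (-2 * r) := by
          rw [mul_right_comm, ht, ← exp_add]
          ring_nf
        rw [← mul_assoc, ← mul_assoc, ← ENNReal.ofReal_mul ht₀,
          ← ENNReal.ofReal_mul (by positivity), hweight]
    _ ≤ _ := by gcongr

theorem pairwise_disjoint_prod_Ico_add_natCast {F : Type*} (s : ℕ → Set F) (a : ℝ) :
    Pairwise (Disjoint on fun k : ℕ => s k ×ˢ Ico (a + k) (a + k + 1)) := fun i j hij =>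
  Set.disjoint_prod.2 <| Or.inr <| by
    simpa using Set.pairwise_disjoint_Ico_add_intCast a (Int.ofNat_injective.ne hij)

variable [Nontrivial E] (μ : Measure E) [μ.IsAddHaarMeasure] {c₀ r : ℝ}

theorem exists_nat_mul_le_mul_cartanMeasure (hc₀ : 0 < c₀) (hr : 0 < r) (K : ℕ) :
    ∃ t > 0, K * (ENNReal.ofReal (exp (-2 * r)) * μ shell) ≤
      ENNReal.ofReal t * cartanMeasure μ r {H | t < tauPrime c₀ r H} := by
  obtain ⟨σ, hσ, t, ht, y, hy⟩ :=
    exists_shell_radii hc₀ hr (finrank_pos (R := ℝ) (M := E)) K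
  set B : ℕ → Set (E × ℝ) := fun k => (y k • shell (E := E)) ×ˢ Ico (σ + k) (σ + k + 1)
  have hB : ∀ k ∈ Finset.range K, MeasurableSet (B k) := fun k hk =>
    ((isOpen_shell.smul₀ (hy k (Finset.mem_range.1 hk)).1.ne').measurableSet).prod
      measurableSet_Ico
  refine ⟨t, ht, ?_⟩
  calc K * (ENNReal.ofReal (exp (-2 * r)) * μ shell)
      = ∑ _k ∈ Finset.range K, ENNReal.ofReal (exp (-2 * r)) * μ shell := by simp
    _ ≤ ∑ k ∈ Finset.range K, ENNReal.ofReal t * cartanMeasure μ r (B k) := by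
      refine Finset.sum_le_sum fun k hk => ?_
      obtain ⟨hyk, -, -, htk⟩ := hy k (Finset.mem_range.1 hk)
      exact ofReal_exp_mul_measure_shell_le μ hr.le hyk ht.le (by rw [htk, add_right_comm])
    _ = ENNReal.ofReal t * cartanMeasure μ r (⋃ k ∈ Finset.range K, B k) := by
      rw [measure_biUnion_finset
        ((pairwise_disjoint_prod_Ico_add_natCast _ σ).set_pairwise _) hB, Finset.mul_sum]
    _ ≤ ENNReal.ofReal t * cartanMeasure μ r {H | t < tauPrime c₀ r H} := by
      refine mul_le_mul_right (measure_mono (iUnion₂_subset fun k hk => ?_)) _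
      obtain ⟨hyk, hay, hyc, htk⟩ := hy k (Finset.mem_range.1 hk)
      exact smul_shell_prod_Ico_subset hc₀.le hr (by positivity) hyk ht.le hay hyc
        (by rw [htk, add_right_comm])

theorem iSup_mul_cartanMeasure_superlevel_eq_top (hc₀ : 0 < c₀) (hr : 0 < r) :
    ⨆ t ∈ Ioi (0 : ℝ), ENNReal.ofReal t * cartanMeasure μ r {H | t < tauPrime c₀ r H} =
      ⊤ := by
  refine iSup_eq_top.2 fun b hb => ?_
  have hc : ENNReal.ofReal (exp (-2 * r)) * μ shell ≠ 0 :=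
    mul_ne_zero (by simp [exp_pos]) (isOpen_shell.measure_pos μ (shell_nonempty (E := E))).ne'
  obtain ⟨K, hK⟩ := ENNReal.exists_nat_mul_gt hc hb.ne
  obtain ⟨t, ht, hle⟩ := exists_nat_mul_le_mul_cartanMeasure μ hc₀ hr K
  exact ⟨t, by rw [iSup_pos (show t ∈ Ioi 0 from ht)]; exact hK.trans_le hle⟩

end CartanKernel

/-- the kernel `τ'(H) = (1+|H'|)^{1-ℓ} e^{-2|ρ|H_ℓ}` supported on
`R = {H_ℓ ≤ |H'|², |H'| < c₀ H_ℓ}` is not in weak-`L¹` with respect to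
`dμ(H) = e^{2|ρ|H_ℓ} dH`. -/
theorem stmt14 (ℓ : ℕ) (hℓ : 2 ≤ ℓ) (r c₀ : ℝ) (hr : 0 < r) (hc₀ : 0 < c₀) :
    ⨆ t ∈ Set.Ioi (0 : ℝ),
      ENNReal.ofReal t *
        (volume.withDensity (fun H : EuclideanSpace ℝ (Fin (ℓ - 1)) × ℝ =>
            ENNReal.ofReal (Real.exp (2 * r * H.2))))
          {H : EuclideanSpace ℝ (Fin (ℓ - 1)) × ℝ |
            t < (if H.2 ≤ ‖H.1‖ ^ 2 ∧ ‖H.1‖ < c₀ * H.2 then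
                  (1 + ‖H.1‖) ^ ((1 : ℝ) - (ℓ : ℝ)) * Real.exp (-2 * r * H.2)
                else 0)} = ⊤ := by
  have hdim : finrank ℝ (EuclideanSpace ℝ (Fin (ℓ - 1))) = ℓ - 1 := finrank_euclideanSpace_fin
  have : Nontrivial (EuclideanSpace ℝ (Fin (ℓ - 1))) :=
    Module.nontrivial_of_finrank_pos (R := ℝ) (by omega)
  have hexp : (1 : ℝ) - ℓ = -(finrank ℝ (EuclideanSpace ℝ (Fin (ℓ - 1))) : ℝ) := by
    rw [hdim, Nat.cast_sub (by omega)]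
    ring
  rw [hexp]
  exact CartanKernel.iSup_mul_cartanMeasure_superlevel_eq_top volume hc₀ hr
end

section
/- Let u ∈ ℝ \ {0}, ℓ ≥ 2, and Q(ζ) = ⟨ζ,ζ⟩ + ⟨ρ,ρ⟩ on the complexification of ℝ^ℓ with bilinear extension, ρ ≠ 0. Consider m(ζ) = Q(ζ)^{iu} (principal branch, defined where Q(ζ) ∉ (-∞, 0]). Then the function ξ ↦ |ξ| · |∂_{ζ_ℓ} m(ξ + iρ)|, where ζ_ℓ is the coordinate along ρ/|ρ|, is unbounded as ξ → 0 with ξ ⊥ ρ: indeed in that limit it equals 2|u| |ξ| |ρ| / |ξ|² · e^{-u·arg Q(ξ+iρ)} up to the bounded factor, which tends to ∞. -/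
/-!
On the slice `ξ ⊥ ρ` the quadratic form `Q(ξ + iρ) = |ξ|²` is real and positive, so the
principal branch gives `|Q^{iu-1}| = |ξ|⁻²` exactly, while `∂_{ζ_ℓ} Q = 2 ζ_ℓ = 2i|ρ|`.
Hence `|ξ| · |∂_{ζ_ℓ} Q^{iu}| = 2|u||ρ| / |ξ|`, which blows up as `ξ → 0`.
-/

open Filter Topology

variable {ι : Type*} [Fintype ι] [DecidableEq ι]

lemma fderiv_sum_sq_add_const_cpow_single (c s : ℂ) {ζ : ι → ℂ}
    (hζ : ∑ j, ζ j ^ 2 + c ∈ Complex.slitPlane) (k : ι) :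
    fderiv ℂ (fun ζ : ι → ℂ => (∑ j, ζ j ^ 2 + c) ^ s) ζ (Pi.single k 1) =
      s * (∑ j, ζ j ^ 2 + c) ^ (s - 1) * (2 * ζ k) := by
  have hQ := (HasFDerivAt.fun_sum (u := Finset.univ) fun j _ =>
    (hasFDerivAt_apply (𝕜 := ℂ) j ζ).pow 2).add_const c
  rw [(hQ.cpow (hasFDerivAt_const s ζ) hζ).fderiv]
  simp [Pi.single_apply]

lemma sum_sq_add_ite_mul_I (ξ : EuclideanSpace ℝ ι) {k : ι} (hk : ξ k = 0) (r : ℝ) :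
    ∑ j, ((ξ j : ℂ) + if j = k then (r : ℂ) * Complex.I else 0) ^ 2 + ((r ^ 2 : ℝ) : ℂ) =
      ((‖ξ‖ ^ 2 : ℝ) : ℂ) := by
  have hsq : ∀ j, ((ξ j : ℂ) + if j = k then (r : ℂ) * Complex.I else 0) ^ 2 =
      (ξ j : ℂ) ^ 2 + if j = k then -((r : ℂ) ^ 2) else 0 := by
    intro j
    split_ifs with hj
    · subst hj; simp [hk, mul_pow]
    · simp
  simp only [hsq, Finset.sum_add_distrib, Finset.sum_ite_eq', Finset.mem_univ, if_true,
    EuclideanSpace.real_norm_sq_eq]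
  push_cast
  ring

lemma norm_mul_norm_fderiv_cpow_I_mul_single (ξ : EuclideanSpace ℝ ι) {k : ι} (hk : ξ k = 0)
    (hξ : ξ ≠ 0) (r u : ℝ) :
    ‖ξ‖ * ‖fderiv ℂ (fun ζ : ι → ℂ => (∑ j, ζ j ^ 2 + ((r ^ 2 : ℝ) : ℂ)) ^ (Complex.I * u))
        (fun j => (ξ j : ℂ) + if j = k then (r : ℂ) * Complex.I else 0) (Pi.single k 1)‖ =
      2 * |u| * |r| / ‖ξ‖ := by
  have hpos : 0 < ‖ξ‖ ^ 2 := by positivity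
  have hslit : ∑ j, ((ξ j : ℂ) + if j = k then (r : ℂ) * Complex.I else 0) ^ 2 +
      ((r ^ 2 : ℝ) : ℂ) ∈ Complex.slitPlane := by
    rw [sum_sq_add_ite_mul_I ξ hk]
    exact Complex.ofReal_mem_slitPlane.2 hpos
  rw [fderiv_sum_sq_add_const_cpow_single _ _ hslit, sum_sq_add_ite_mul_I ξ hk, norm_mul, norm_mul, Complex.norm_cpow_eq_rpow_re_of_pos hpos]
  simp only [Complex.norm_mul, Complex.norm_I, Complex.norm_real, Real.norm_eq_abs, one_mul,
    Complex.sub_re, Complex.mul_re, Complex.I_re, Complex.ofReal_re, zero_mul, Complex.I_im,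
    Complex.ofReal_im, mul_zero, sub_self, Complex.one_re, zero_sub, Real.rpow_neg_one, hk,
    Complex.ofReal_zero, ↓reduceIte, zero_add, Complex.norm_ofNat, mul_one]
  field_simp

lemma tendsto_const_div_norm_nhdsNE_zero {E : Type*} [NormedAddCommGroup E] {c : ℝ} (hc : 0 < c) :
    Tendsto (fun x : E => c / ‖x‖) (𝓝[≠] 0) atTop := by
  simpa only [div_eq_mul_inv, Function.comp_def] using
    (tendsto_inv_nhdsGT_zero.comp tendsto_norm_nhdsNE_zero).const_mul_atTop hc

/-- Remark 2.2: for the imaginary-power multiplier `m(ζ) = Q(ζ)^{iu}` with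
`Q(ζ) = Σ ζ_j² + |ρ|²` (here `ρ = r·e_last`, `r > 0`), the function
`ξ ↦ |ξ| · |∂_{ζ_last} m(ξ + iρ)|` is unbounded as `ξ → 0` with `ξ ⊥ ρ` (ξ_last = 0);
in fact it tends to `+∞`, so the isotropic Mihlin–Hörmander condition fails in rank ≥ 2. -/
theorem stmt18 (ℓ : ℕ) (r u : ℝ) (hr : 0 < r) (hu : u ≠ 0) :
    Tendsto
      (fun ξ : EuclideanSpace ℝ (Fin (ℓ + 2)) =>
        ‖ξ‖ *
          Norm.norm
            (fderiv ℂ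
              (fun ζ : Fin (ℓ + 2) → ℂ =>
                (∑ j, ζ j ^ 2 + ((r ^ 2 : ℝ) : ℂ)) ^ (Complex.I * (u : ℂ)))
              (fun j => (ξ j : ℂ) + if j = Fin.last (ℓ + 1) then (r : ℂ) * Complex.I else 0)
              (Pi.single (Fin.last (ℓ + 1)) 1)))
      (nhdsWithin 0
        {ξ : EuclideanSpace ℝ (Fin (ℓ + 2)) | ξ (Fin.last (ℓ + 1)) = 0 ∧ ξ ≠ 0})
      atTop := by
  have hc : 0 < 2 * |u| * |r| := by
    have := abs_pos.2 hu
    have := abs_pos.2 hr.ne'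
    positivity
  have hS : {ξ : EuclideanSpace ℝ (Fin (ℓ + 2)) | ξ (Fin.last (ℓ + 1)) = 0 ∧ ξ ≠ 0} ⊆ {0}ᶜ :=
    fun ξ hξ => hξ.2
  refine ((tendsto_const_div_norm_nhdsNE_zero hc).mono_left (nhdsWithin_mono _ hS)).congr' ?_
  filter_upwards [self_mem_nhdsWithin] with ξ ⟨hlast, hξ⟩
  exact (norm_mul_norm_fderiv_cpow_I_mul_single ξ hlast hξ r u).symm
end
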